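/- arXiv:1512.08606 — 13 statements merged into one kernel-verified Lean document; each statement's English description precedes it below -/
import Mathlib

section
/- A product X × Y of two topological spaces has property (III_ℵ) if and only if both X and Y have property (III_ℵ). -/
universe u

open Cardinal

/-- Property (I_ℵ): every locally finite family of nonempty open sets has cardinality ≤ ℵ. -/
def PropI (c : Cardinal.{u}) (X : Type u) [TopologicalSpace X] : Prop :=
  ∀ (I : Type u) (U : I → Set X), (∀ i, IsOpen (U i)) → (∀ i, (U i).Nonempty) →
    LocallyFinite U → #I ≤ c

/-- Property (II_ℵ): every pointwise finite family of nonempty open sets has cardinality ≤ ℵ. -/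
def PropII (c : Cardinal.{u}) (X : Type u) [TopologicalSpace X] : Prop :=
  ∀ (I : Type u) (U : I → Set X), (∀ i, IsOpen (U i)) → (∀ i, (U i).Nonempty) →
    (∀ x : X, {i | x ∈ U i}.Finite) → #I ≤ c

/-- Property (III_ℵ): every ℵ-pointwise family of nonempty open sets has cardinality ≤ ℵ. -/
def PropIII (c : Cardinal.{u}) (X : Type u) [TopologicalSpace X] : Prop :=
  ∀ (I : Type u) (U : I → Set X), (∀ i, IsOpen (U i)) → (∀ i, (U i).Nonempty) →
    (∀ x : X, #{i | x ∈ U i} ≤ c) → #I ≤ c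
theorem stmt1 (c : Cardinal.{u}) (hc : Cardinal.aleph0 ≤ c)
    (X Y : Type u) [TopologicalSpace X] [TopologicalSpace Y]
    [Nonempty X] [Nonempty Y] :
    PropIII c (X × Y) ↔ (PropIII c X ∧ PropIII c Y) := by
  constructor
  · intro h
    constructor
    · intro I U hopen hne hpt
      refine h I (fun i => U i ×ˢ (Set.univ : Set Y))
        (fun i => (hopen i).prod isOpen_univ)
        (fun i => (hne i).prod Set.univ_nonempty) ?_
      intro p
      simpa using hpt p.1
    · intro I U hopen hne hpt
      refine h I (fun i => (Set.univ : Set X) ×ˢ U i)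
        (fun i => isOpen_univ.prod (hopen i))
        (fun i => Set.univ_nonempty.prod (hne i)) ?_
      intro p
      simpa using hpt p.2
  · rintro ⟨hX, hY⟩ I W hopen hne hpt
    choose p hp using hne
    have h1 : ∀ i, ∃ u v, IsOpen u ∧ IsOpen v ∧ (p i).1 ∈ u ∧ (p i).2 ∈ v ∧
        u ×ˢ v ⊆ W i := fun i =>
      isOpen_prod_iff.mp (hopen i) (p i).1 (p i).2 (by simpa using hp i)
    choose U V hU hV hxU hyV hsub using h1
    refine hX I U hU (fun i => ⟨_, hxU i⟩) ?_
    intro x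
    refine hY {i | x ∈ U i} (fun j => V j) (fun j => hV j) (fun j => ⟨_, hyV j⟩) ?_
    intro y
    have hinj : Function.Injective
        (fun j : {j : {i | x ∈ U i} | y ∈ V j.1} =>
          (⟨j.1.1, hsub j.1.1 ⟨j.1.2, j.2⟩⟩ : {i | (x, y) ∈ W i})) := by
      intro a b hab
      simp only [Subtype.mk.injEq] at hab
      exact Subtype.ext (Subtype.ext hab)
    exact le_trans (Cardinal.mk_le_of_injective hinj) (hpt (x, y))
end

section
/- A topological product X = ∏_{s∈S} X_s of a family of nonempty topological spaces has property (III_ℵ) if and only if every factor X_s has property (III_ℵ). -/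
universe u

open Cardinal

/-! Projections are continuous surjections, and (III_ℵ) passes to continuous images.
Conversely, shrink each member of a family of more than ℵ open sets to a basic box `∏_{s ∈ F} V_s`
around one of its points; by pigeonhole, more than ℵ of the boxes have supports `F` of one size `n`,
and we induct on `n`. If some coordinate `s₀` lies in the supports of more than ℵ boxes, (III_ℵ)
for `X s₀` gives a value `x₀` lying in more than ℵ of their sections `V_{s₀}`; fixing the
coordinate `s₀` at `x₀` and removing it from these supports lowers `n`. Otherwise every coordinate
lies in at most ℵ supports, so more than ℵ of the boxes have pairwise disjoint supports, and a
single point lies in all of them. -/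

theorem PropIII.of_surjective {c : Cardinal.{u}} {X Y : Type u} [TopologicalSpace X]
    [TopologicalSpace Y] (hX : PropIII c X) {f : X → Y} (hf : Continuous f)
    (hsurj : Function.Surjective f) : PropIII c Y := fun I U hU hne hpt =>
  hX I (fun i => f ⁻¹' U i) (fun i => (hU i).preimage hf)
    (fun i => (hne i).preimage hsurj) (fun x => hpt (f x))

theorem PropIII.exists_lt_mk_sep {c : Cardinal.{u}} {X : Type u} [TopologicalSpace X]
    (hX : PropIII c X) {I : Type u} {J : Set I} {U : I → Set X}
    (hU : ∀ i ∈ J, IsOpen (U i)) (hne : ∀ i ∈ J, (U i).Nonempty) (hJ : c < #J) :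
    ∃ x, c < #{i | i ∈ J ∧ x ∈ U i} := by
  by_contra! hpt
  refine hJ.not_ge <| hX J (fun j => U j) (fun j => hU j j.2) (fun j => hne j j.2) fun x => ?_
  refine le_trans ?_ (hpt x)
  exact mk_le_of_injective (f := fun j => ⟨j.1.1, j.1.2, j.2⟩)
    fun a b h => Subtype.ext <| Subtype.ext <| (Subtype.ext_iff.1 h : _)

theorem mk_biUnion_le_of_mk_le {ι α : Type u} {c : Cardinal.{u}} (hc : ℵ₀ ≤ c)
    {s : Set ι} {A : ι → Set α} (hs : #s ≤ c) (hA : ∀ i ∈ s, #(A i) ≤ c) :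
    #(⋃ i ∈ s, A i) ≤ c :=
  calc #(⋃ i ∈ s, A i) ≤ #s * ⨆ i : s, #(A i) := mk_biUnion_le A s
    _ ≤ c * c := mul_le_mul' hs (ciSup_le' fun i => hA i i.2)
    _ = c := mul_eq_self hc

theorem exists_lt_mk_preimage_singleton {c : Cardinal.{u}} (hc : ℵ₀ ≤ c) {α β : Type u}
    (f : α → β) (hβ : #β ≤ c) (hα : c < #α) : ∃ b, c < #(f ⁻¹' {b}) := by
  by_contra! hfib
  exact hα.not_ge <| (mk_le_mk_mul_of_mk_preimage_le f hfib).trans <|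
    (mul_le_mul' hβ le_rfl).trans (mul_eq_self hc).le

theorem exists_pairwiseDisjoint_lt_mk {c : Cardinal.{u}} (hc : ℵ₀ ≤ c) {I S : Type u}
    (F : I → Finset S) {J : Set I} (hF : ∀ s, #{i | i ∈ J ∧ s ∈ F i} ≤ c) (hJ : c < #J) :
    ∃ K ⊆ J, K.PairwiseDisjoint F ∧ c < #K := by
  obtain ⟨K, ⟨hKJ, hK⟩, hmax⟩ :=
    zorn_subset {K | K ⊆ J ∧ K.PairwiseDisjoint F} fun ch hch hchain =>
    ⟨⋃₀ ch, ⟨Set.sUnion_subset fun K hK => (hch hK).1,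
      (Set.pairwiseDisjoint_sUnion hchain.directedOn).2 fun K hK => (hch hK).2⟩,
      fun _ => Set.subset_sUnion_of_mem⟩
  refine ⟨K, hKJ, hK, lt_of_not_ge fun hKc => ?_⟩
  -- if `K` were small, so would be the set `B` of indices whose support meets that of `K`,
  -- and an index of `J` outside `K ∪ B` could be added to `K`
  set B := ⋃ s ∈ ⋃ i ∈ K, (F i : Set S), {i | i ∈ J ∧ s ∈ F i}
  have hB : #B ≤ c := mk_biUnion_le_of_mk_le hc
    (mk_biUnion_le_of_mk_le hc hKc fun i _ => (Finset.finite_toSet _).lt_aleph0.le.trans hc)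
    fun s _ => hF s
  obtain ⟨i₀, hi₀J, hi₀⟩ := Set.not_subset.1 fun hsub : J ⊆ K ∪ B =>
    hJ.not_ge <| (mk_le_mk_of_subset hsub).trans <|
      (mk_union_le K B).trans <| (add_le_add hKc hB).trans (add_eq_self hc).le
  have hinsert : insert i₀ K ∈ {K | K ⊆ J ∧ K.PairwiseDisjoint F} :=
    ⟨Set.insert_subset hi₀J hKJ, hK.insert fun j hj _ => Finset.disjoint_left.2 fun s hs hsj =>
      hi₀ <| Or.inr <| Set.mem_biUnion (Set.mem_biUnion hj hsj) ⟨hi₀J, hs⟩⟩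
  exact hi₀ <| Or.inl <| hmax hinsert (Set.subset_insert _ _) (Set.mem_insert _ _)

theorem exists_eqOn_of_pairwiseDisjoint {I S : Type*} {X : S → Type*} [∀ s, Nonempty (X s)]
    {F : I → Finset S} {K : Set I} (hK : K.PairwiseDisjoint F) (p : I → ∀ s, X s) :
    ∃ x : ∀ s, X s, ∀ i ∈ K, ∀ s ∈ F i, x s = p i s := by
  classical
  refine ⟨fun s => if h : ∃ i ∈ K, s ∈ F i then p h.choose s else Classical.arbitrary _,
    fun i hi s hs => ?_⟩
  have h : ∃ i ∈ K, s ∈ F i := ⟨i, hi, hs⟩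
  dsimp only
  rw [dif_pos h, hK.elim_finset h.choose_spec.1 hi s h.choose_spec.2 hs]

section Boxes

variable {c : Cardinal.{u}} {S : Type u} {X : S → Type u} [∀ s, TopologicalSpace (X s)]
  [∀ s, Nonempty (X s)]

theorem exists_lt_mk_mem_pi_of_card_le (hc : ℵ₀ ≤ c) (hX : ∀ s, PropIII c (X s)) (n : ℕ)
    {I : Type u} (F : I → Finset S) (V : I → ∀ s, Set (X s)) {J : Set I}
    (hV : ∀ i ∈ J, ∀ s ∈ F i, IsOpen (V i s)) (hne : ∀ i ∈ J, ((F i : Set S).pi (V i)).Nonempty)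
    (hcard : ∀ i ∈ J, (F i).card ≤ n) (hJ : c < #J) :
    ∃ x : ∀ s, X s, c < #{i | i ∈ J ∧ x ∈ (F i : Set S).pi (V i)} := by
  classical
  induction n generalizing F J with
  | zero =>
    refine ⟨Classical.arbitrary _, hJ.trans_le <| mk_le_mk_of_subset fun i hi => ⟨hi, ?_⟩⟩
    simp [Finset.card_eq_zero.1 (Nat.le_zero.1 (hcard i hi))]
  | succ n ih =>
    by_cases hcrowd : ∃ s₀, c < #{i | i ∈ J ∧ s₀ ∈ F i}
    · obtain ⟨s₀, hs₀⟩ := hcrowd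
      obtain ⟨x₀, hx₀⟩ := (hX s₀).exists_lt_mk_sep (U := fun i => V i s₀)
        (fun i hi => hV i hi.1 s₀ hi.2)
        (fun i hi => ⟨_, (hne i hi.1).some_mem s₀ hi.2⟩) hs₀
      obtain ⟨y, hy⟩ := ih (fun i => (F i).erase s₀) (J := {i | (i ∈ J ∧ s₀ ∈ F i) ∧ x₀ ∈ V i s₀})
        (fun i hi s hs => hV i hi.1.1 s (Finset.mem_of_mem_erase hs))
        (fun i hi => (hne i hi.1.1).mono <| Set.pi_mono' (fun _ _ => subset_rfl) <| by simp)
        (fun i hi => by have := hcard i hi.1.1; rw [Finset.card_erase_of_mem hi.1.2]; omega) hx₀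
      refine ⟨Function.update y s₀ x₀, hy.trans_le <| mk_le_mk_of_subset ?_⟩
      rintro i ⟨⟨⟨hiJ, hs₀i⟩, hx₀i⟩, hyi⟩
      refine ⟨hiJ, Set.update_mem_pi_iff.2 ⟨fun s hs => hyi s ?_, fun _ => hx₀i⟩⟩
      simpa [and_comm] using hs
    · push Not at hcrowd
      obtain ⟨K, hKJ, hK, hKc⟩ := exists_pairwiseDisjoint_lt_mk hc F hcrowd hJ
      choose! p hp using hne
      obtain ⟨x, hx⟩ := exists_eqOn_of_pairwiseDisjoint hK p
      refine ⟨x, hKc.trans_le <| mk_le_mk_of_subset fun i hi => ⟨hKJ hi, fun s hs => ?_⟩⟩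
      rw [hx i hi s hs]
      exact hp i (hKJ hi) s hs

theorem exists_lt_mk_mem_pi (hc : ℵ₀ ≤ c) (hX : ∀ s, PropIII c (X s)) {I : Type u}
    (F : I → Finset S) (V : I → ∀ s, Set (X s)) (hV : ∀ i, ∀ s ∈ F i, IsOpen (V i s))
    (hne : ∀ i, ((F i : Set S).pi (V i)).Nonempty) (hI : c < #I) :
    ∃ x : ∀ s, X s, c < #{i | x ∈ (F i : Set S).pi (V i)} := by
  obtain ⟨⟨n⟩, hn⟩ := exists_lt_mk_preimage_singleton hc (fun i => ULift.up.{u} (F i).card)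
    (by rw [mk_denumerable]; exact hc) hI
  obtain ⟨x, hx⟩ := exists_lt_mk_mem_pi_of_card_le hc hX n F V (fun i _ => hV i)
    (fun i _ => hne i) (fun i hi => (congrArg ULift.down hi).le) hn
  exact ⟨x, hx.trans_le <| mk_le_mk_of_subset fun i hi => hi.2⟩

end Boxes

theorem PropIII.pi {c : Cardinal.{u}} (hc : ℵ₀ ≤ c) {S : Type u} {X : S → Type u}
    [∀ s, TopologicalSpace (X s)] [∀ s, Nonempty (X s)] (hX : ∀ s, PropIII c (X s)) :
    PropIII c (∀ s, X s) := by
  intro I U hU hne hpt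
  by_contra! hI
  have hbox := fun i => isOpen_pi_iff.1 (hU i) (hne i).some (hne i).some_mem
  choose F V hFV hVU using hbox
  obtain ⟨x, hx⟩ := exists_lt_mk_mem_pi hc hX F V (fun i s hs => (hFV i s hs).1)
    (fun i => ⟨_, fun s hs => (hFV i s hs).2⟩) hI
  exact (hpt x).not_gt <| hx.trans_le <| mk_le_mk_of_subset fun i hi => hVU i hi

theorem stmt2 (c : Cardinal.{u}) (hc : Cardinal.aleph0 ≤ c)
    (S : Type u) (X : S → Type u) [∀ s, TopologicalSpace (X s)]
    [∀ s, Nonempty (X s)] :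
    PropIII c (∀ s, X s) ↔ ∀ s, PropIII c (X s) :=
  ⟨fun h s => h.of_surjective (continuous_apply s) (Function.surjective_eval s), PropIII.pi hc⟩
end

section
/- If X is a metrizable space and every locally finite family of nonempty open subsets of X has cardinality at most ℵ (property (I_ℵ)), then X has a dense subset of cardinality at most ℵ. -/
universe u

open Cardinal

theorem stmt3 (c : Cardinal.{u}) (hc : Cardinal.aleph0 ≤ c)
    (X : Type u) [TopologicalSpace X] [TopologicalSpace.MetrizableSpace X]
    (h : PropI c X) :
    ∃ D : Set X, Dense D ∧ #D ≤ c := by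
  letI : MetricSpace X := TopologicalSpace.metrizableSpaceMetric X
  have key : ∀ n : ℕ, ∃ S : Set X,
      (∀ x : X, ∃ y ∈ S, dist x y < 1/(n+1 : ℝ)) ∧ #S ≤ c := by
    intro n
    set ε : ℝ := 1/(n+1 : ℝ) with hεdef
    have hε : 0 < ε := by positivity
    obtain ⟨S, hSmax⟩ := zorn_subset
      {s : Set X | ∀ x ∈ s, ∀ y ∈ s, x ≠ y → ε ≤ dist x y} (by
        intro ch hch hchain
        refine ⟨⋃₀ ch, ?_, fun s hs => Set.subset_sUnion_of_mem hs⟩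
        rintro x ⟨s, hs, hxs⟩ y ⟨t, ht, hyt⟩ hxy
        rcases hchain.total hs ht with hst | hts
        · exact hch ht x (hst hxs) y hyt hxy
        · exact hch hs x hxs y (hts hyt) hxy)
    have hSsep := hSmax.prop
    refine ⟨S, ?_, ?_⟩
    · -- maximality gives ε-density
      intro x
      by_contra hcon
      push_neg at hcon
      have hxS : x ∉ S := fun hx => by
        have := hcon x hx; simp at this; linarith
      have hins : insert x S ∈ {s : Set X | ∀ a ∈ s, ∀ b ∈ s, a ≠ b → ε ≤ dist a b} := by
        rintro a (rfl | ha) b (rfl | hb) hab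
        · exact absurd rfl hab
        · have := hcon b hb; linarith
        · have := hcon a ha; rw [dist_comm]; linarith
        · exact hSsep a ha b hb hab
      have hsub : insert x S ⊆ S := hSmax.2 hins (Set.subset_insert x S)
      exact hxS (hsub (Set.mem_insert x S))
    · -- cardinality bound via PropI
      refine h (↥S) (fun i => Metric.ball (i : X) (ε/4)) (fun i => Metric.isOpen_ball)
        (fun i => ⟨i, by simpa using by positivity⟩) ?_
      intro y
      refine ⟨Metric.ball y (ε/4), Metric.ball_mem_nhds y (by positivity), ?_⟩
      have hsub : {i : ↥S |
          (Metric.ball (i : X) (ε/4) ∩ Metric.ball y (ε/4)).Nonempty}.Subsingleton := by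
        rintro ⟨a, ha⟩ ⟨za, hza1, hza2⟩ ⟨b, hb⟩ ⟨zb, hzb1, hzb2⟩
        simp only [Metric.mem_ball] at hza1 hza2 hzb1 hzb2
        by_contra hab
        have hne : a ≠ b := fun hh => hab (by simpa using hh)
        have hsep := hSsep a ha b hb hne
        have t1 : dist a b ≤ dist a za + dist za y + dist y zb + dist zb b := by
          calc dist a b ≤ dist a y + dist y b := dist_triangle a y b
            _ ≤ (dist a za + dist za y) + (dist y zb + dist zb b) :=
                add_le_add (dist_triangle a za y) (dist_triangle y zb b)
            _ = _ := by ring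
        rw [dist_comm a za, dist_comm y zb] at t1
        linarith
      exact hsub.finite
  choose S hdense hcard using key
  refine ⟨⋃ n : ULift.{u} ℕ, S n.down, ?_, ?_⟩
  · rw [Metric.dense_iff]
    intro x r hr
    obtain ⟨n, hn⟩ := exists_nat_one_div_lt hr
    obtain ⟨y, hy, hxy⟩ := hdense n x
    exact ⟨y, Metric.mem_ball'.2 (by rw [dist_comm] at hxy ⊢; exact hxy.trans hn),
      Set.mem_iUnion.2 ⟨⟨n⟩, hy⟩⟩
  · calc #(⋃ n : ULift.{u} ℕ, S n.down) ≤ #(ULift.{u} ℕ) * ⨆ n : ULift.{u} ℕ, #(S n.down) :=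
        Cardinal.mk_iUnion_le _
      _ ≤ ℵ₀ * c := by
          rw [Cardinal.mk_uLift, Cardinal.mk_nat, Cardinal.lift_aleph0]
          exact mul_le_mul' le_rfl (ciSup_le' fun n => hcard n.down)
      _ ≤ c * c := mul_le_mul' hc le_rfl
      _ = c := Cardinal.mul_eq_self hc
end

section
/- For a metrizable space X and an infinite cardinal ℵ, the following are equivalent: (I_ℵ) every locally finite family of nonempty open sets has cardinality ≤ ℵ; (II_ℵ) every pointwise finite family of nonempty open sets has cardinality ≤ ℵ; (III_ℵ) every ℵ-pointwise family of nonempty open sets has cardinality ≤ ℵ; and d(X) ≤ ℵ. -/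
universe u

open Cardinal

lemma exists_maximal_separated {X : Type u} [MetricSpace X] (r : ℝ) :
    ∃ S : Set X, S.Pairwise (fun x y => r ≤ dist x y) ∧
      ∀ y : X, y ∉ S → ∃ x ∈ S, dist y x < r := by
  obtain ⟨m, hm⟩ := zorn_subset {S : Set X | S.Pairwise (fun x y => r ≤ dist x y)}
    (fun C hC hchain => ⟨⋃₀ C, fun x hx y hy hxy => by
      obtain ⟨s, hs, hxs⟩ := hx
      obtain ⟨t, ht, hyt⟩ := hy
      rcases hchain.total hs ht with h | h
      · exact hC ht (h hxs) hyt hxy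
      · exact hC hs hxs (h hyt) hxy, fun s hs => Set.subset_sUnion_of_mem hs⟩)
  refine ⟨m, hm.prop, fun y hy => ?_⟩
  by_contra hcon
  push_neg at hcon
  have : insert y m ∈ {S : Set X | S.Pairwise (fun x y => r ≤ dist x y)} := by
    refine hm.prop.insert fun x hx hxy => ⟨hcon x hx, ?_⟩
    · rw [dist_comm]; exact hcon x hx
  exact hy (hm.2 this (Set.subset_insert y m) (Set.mem_insert y m))

theorem stmt4 (c : Cardinal.{u}) (hc : Cardinal.aleph0 ≤ c)
    (X : Type u) [TopologicalSpace X] [TopologicalSpace.MetrizableSpace X] :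
    List.TFAE [PropI c X, PropII c X, PropIII c X,
      ∃ D : Set X, Dense D ∧ #D ≤ c] := by
  tfae_have 3 → 2
  | h3 => by
    intro I U hUo hUne hpt
    exact h3 I U hUo hUne fun x => ((hpt x).lt_aleph0.le.trans hc)
  tfae_have 2 → 1
  | h2 => by
    intro I U hUo hUne hlf
    exact h2 I U hUo hUne hlf.point_finite
  tfae_have 4 → 3
  | ⟨D, hD, hDc⟩ => by
    intro I U hUo hUne hpt
    choose f hfD hfU using fun i => hD.exists_mem_open (hUo i) (hUne i)
    have key : ∀ d : D, #((fun i => (⟨f i, hfD i⟩ : D)) ⁻¹' {d}) ≤ c := by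
      intro d
      refine le_trans (Cardinal.mk_le_mk_of_subset (t := {i | (d : X) ∈ U i}) ?_) (hpt d)
      intro i hi
      have : f i = (d : X) := congrArg Subtype.val hi
      simpa [Set.mem_setOf_eq, ← this] using hfU i
    calc #I ≤ #D * c := Cardinal.mk_le_mk_mul_of_mk_preimage_le _ key
      _ ≤ c * c := mul_le_mul_left hDc c
      _ = c := Cardinal.mul_eq_self hc
  tfae_have 1 → 4
  | h1 => by
    letI : MetricSpace X := TopologicalSpace.metrizableSpaceMetric X
    have hsep : ∀ n : ℕ, ∃ S : Set X,
        S.Pairwise (fun x y => 1 / (n + 1 : ℝ) ≤ dist x y) ∧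
        ∀ y : X, y ∉ S → ∃ x ∈ S, dist y x < 1 / (n + 1 : ℝ) :=
      fun n => exists_maximal_separated _
    choose S hSsep hSmax using hsep
    have hcard : ∀ n : ℕ, #(S n) ≤ c := by
      intro n
      set r : ℝ := 1 / (n + 1 : ℝ) with hr
      have hrpos : 0 < r := by positivity
      refine h1 (S n) (fun x => Metric.ball (x : X) (r / 4)) (fun x => Metric.isOpen_ball)
        (fun x => Metric.nonempty_ball.2 (by positivity)) ?_
      intro y
      refine ⟨Metric.ball y (r / 4), Metric.ball_mem_nhds y (by positivity), ?_⟩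
      have hsub : {x : S n | (Metric.ball (x : X) (r / 4) ∩ Metric.ball y (r / 4)).Nonempty}.Subsingleton := by
        rintro ⟨x, hx⟩ ⟨z, hzb, hzx⟩ ⟨x', hx'⟩ ⟨z', hzb', hzx'⟩
        have hd : dist x x' < r := by
          have h1 : dist y (x : X) < r / 2 := by
            calc dist y (x : X) ≤ dist y z + dist z (x : X) := dist_triangle _ _ _
              _ < r / 4 + r / 4 := add_lt_add (Metric.mem_ball'.1 hzx) (Metric.mem_ball.1 hzb)
              _ = r / 2 := by ring
          have h2 : dist y (x' : X) < r / 2 := by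
            calc dist y (x' : X) ≤ dist y z' + dist z' (x' : X) := dist_triangle _ _ _
              _ < r / 4 + r / 4 := add_lt_add (Metric.mem_ball'.1 hzx') (Metric.mem_ball.1 hzb')
              _ = r / 2 := by ring
          calc dist (x : X) (x' : X) ≤ dist (x : X) y + dist y (x' : X) := dist_triangle _ _ _
            _ < r / 2 + r / 2 := add_lt_add (by rwa [dist_comm]) h2
            _ = r := by ring
        by_contra hne
        have hxx' : (x : X) ≠ (x' : X) := fun h => hne (by ext; exact h)
        exact absurd (hSsep n hx hx' hxx') (not_le.2 hd)
      exact hsub.finite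
    refine ⟨⋃ n : ULift.{u} ℕ, S n.down, ?_, ?_⟩
    · rw [Metric.dense_iff]
      intro x ε hε
      obtain ⟨n, hn⟩ := exists_nat_one_div_lt hε
      by_cases hx : x ∈ S n
      · exact ⟨x, Metric.mem_ball_self hε, Set.mem_iUnion.2 ⟨⟨n⟩, hx⟩⟩
      · obtain ⟨z, hz, hdz⟩ := hSmax n x hx
        exact ⟨z, Metric.mem_ball'.2 (hdz.trans hn), Set.mem_iUnion.2 ⟨⟨n⟩, hz⟩⟩
    · calc #(⋃ n : ULift.{u} ℕ, S n.down) ≤ #(ULift.{u} ℕ) * ⨆ n : ULift.{u} ℕ, #(S n.down) :=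
          Cardinal.mk_iUnion_le _
        _ ≤ ℵ₀ * c := by
          gcongr
          · exact le_of_eq (by simp)
          · exact ciSup_le' fun n => hcard n.down
        _ ≤ c * c := mul_le_mul_left hc c
        _ = c := Cardinal.mul_eq_self hc
  tfae_finish
end

section
/- For every infinite cardinal ℵ and every index set S with |S| > 2^ℵ, the product space [0,1]^S has property (III_ℵ) but has density strictly greater than ℵ. -/
/-
Every nonempty open subset of a power `Y^S` of a second-countable space contains a box
`{x | x s ∈ V for (s, V) ∈ P}` with `P` a finite set of constraints taken from a countable basis.
If more than `ℵ` nonempty open sets are given, each point lying in at most `ℵ` of them, then more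
than `ℵ` distinct boxes occur, and since only countably many boxes share a support, more than `ℵ`
distinct supports. By the Δ-system lemma more than `ℵ` of these supports pairwise meet in a common
root `R`, and by pigeonhole more than `ℵ` of the corresponding boxes impose the same constraints
on `R`. A point that agrees with one of them on `R` and with each box on its private coordinates
lies in all of them: contradiction.

A dense `D ⊆ Y^S` with `Y` Hausdorff and nontrivial separates the coordinates,
`s ↦ {d ∈ D | d s ∈ V}` being injective, so `|S| ≤ 2^|D|`; hence `|S| > 2^ℵ` forces `|D| > ℵ`.
-/

universe u

open Cardinal

universe v

open Set TopologicalSpace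

section Counting

variable {α β : Type u} {c : Cardinal.{u}}

theorem mk_le_of_mk_image_le_of_mk_fiber_le (hc : ℵ₀ ≤ c) {s : Set α} {f : α → β}
    (himage : #(f '' s) ≤ c) (hfiber : ∀ b, #{a ∈ s | f a = b} ≤ c) : #s ≤ c :=
  calc #s ≤ #(⋃ b ∈ f '' s, {a ∈ s | f a = b}) :=
        mk_le_mk_of_subset fun _ ha => mem_biUnion (mem_image_of_mem f ha) ⟨ha, rfl⟩
    _ ≤ #(f '' s) * ⨆ b : f '' s, #{a ∈ s | f a = b} := mk_biUnion_le _ _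
    _ ≤ c * c := mul_le_mul' himage (ciSup_le' fun b => hfiber b)
    _ = c := mul_eq_self hc

theorem exists_lt_mk_fiber (hc : ℵ₀ ≤ c) {s : Set α} {f : α → β} (hs : c < #s)
    (himage : #(f '' s) ≤ c) : ∃ b, c < #{a ∈ s | f a = b} := by
  by_contra! hfiber
  exact hs.not_ge (mk_le_of_mk_image_le_of_mk_fiber_le hc himage hfiber)

end Counting

section DeltaSystem

variable {α : Type u} {c : Cardinal.{u}}

theorem exists_pairwiseDisjoint_of_mk_mem_le (hc : ℵ₀ ≤ c) {A : Set (Finset α)} (hA : c < #A)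
    (hmem : ∀ x, #{F ∈ A | x ∈ F} ≤ c) : ∃ B ⊆ A, c < #B ∧ B.PairwiseDisjoint id := by
  obtain ⟨B, hB⟩ := zorn_subset {B | B ⊆ A ∧ B.PairwiseDisjoint id} fun ch hch hchain =>
    ⟨⋃₀ ch, ⟨sUnion_subset fun B hB => (hch hB).1, hchain.pairwiseDisjoint_sUnion id |>.2
      fun B hB => (hch hB).2⟩, fun _ => subset_sUnion_of_mem⟩
  refine ⟨B, hB.prop.1, ?_, hB.prop.2⟩
  by_contra! hB_le
  set T : Set α := ⋃ F ∈ B, (F : Set α)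
  have hT : #T ≤ c :=
    calc #T ≤ #B * ⨆ F : B, #((F : Finset α) : Set α) := mk_biUnion_le _ _
      _ ≤ c * c := mul_le_mul' hB_le (ciSup_le' fun F => mk_le_aleph0.trans hc)
      _ = c := mul_eq_self hc
  -- by maximality of `B`, every member of `A` outside `B` meets `⋃ B`
  have hcover : A ⊆ B ∪ ⋃ x ∈ T, {F ∈ A | x ∈ F} := by
    intro F hF
    by_cases hFT : ∃ x ∈ F, x ∈ T
    · obtain ⟨x, hxF, hxT⟩ := hFT
      exact Or.inr (mem_biUnion hxT ⟨hF, hxF⟩)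
    · push Not at hFT
      refine Or.inl (hB.mem_of_prop_insert ⟨insert_subset hF hB.prop.1, hB.prop.2.insert ?_⟩)
      intro G hG _
      exact Finset.disjoint_left.2 fun x hxF hxG => hFT x hxF (mem_biUnion hG hxG)
  refine hA.not_ge ?_
  calc #A ≤ #B + #(⋃ x ∈ T, {F ∈ A | x ∈ F}) :=
        (mk_le_mk_of_subset hcover).trans (mk_union_le _ _)
    _ ≤ c + c * c := add_le_add hB_le <|
        (mk_biUnion_le _ _).trans (mul_le_mul' hT (ciSup_le' fun x => hmem x))
    _ = c := by rw [mul_eq_self hc, add_eq_self hc]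

variable [DecidableEq α]

theorem exists_deltaSystem_of_forall_card_eq (hc : ℵ₀ ≤ c) (n : ℕ) :
    ∀ A : Set (Finset α), (∀ F ∈ A, F.card = n) → c < #A →
      ∃ R, ∃ B ⊆ A, c < #B ∧ B.Pairwise fun F G => F ∩ G = R := by
  induction n with
  | zero =>
    intro A hA hcA
    have : #A ≤ 1 := (mk_le_mk_of_subset fun F hF =>
      (Finset.card_eq_zero.1 (hA F hF) : F ∈ ({∅} : Set (Finset α)))).trans_eq (mk_singleton _)
    exact absurd (hcA.trans_le this) (one_le_aleph0.trans hc).not_gt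
  | succ n ih =>
    intro A hA hcA
    by_cases hstar : ∃ x, c < #{F ∈ A | x ∈ F}
    · obtain ⟨x, hx⟩ := hstar
      set Ax := {F ∈ A | x ∈ F}
      have hinj : InjOn (Finset.erase · x) Ax := fun F hF G hG h => by
        rw [← Finset.insert_erase hF.2, ← Finset.insert_erase hG.2]
        exact congrArg (insert x) h
      obtain ⟨R, B, hBsub, hcB, hB⟩ := ih ((Finset.erase · x) '' Ax)
        (by rintro _ ⟨F, hF, rfl⟩; simp [hF.2, hA F hF.1])
        (by rwa [mk_image_eq_of_injOn _ _ hinj])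
      refine ⟨insert x R, {F ∈ Ax | F.erase x ∈ B}, fun F hF => hF.1.1, ?_, ?_⟩
      · refine hcB.trans_le (le_trans (mk_le_mk_of_subset (t := (Finset.erase · x) '' _) ?_)
          mk_image_le)
        intro G hG
        obtain ⟨F, hF, rfl⟩ := hBsub hG
        exact ⟨F, ⟨hF, hG⟩, rfl⟩
      · rintro F ⟨hF, hFB⟩ G ⟨hG, hGB⟩ hFG
        rw [← hB hFB hGB (hinj.ne hF hG hFG), Finset.erase_inter, Finset.inter_erase,
          Finset.erase_idem, Finset.insert_erase (Finset.mem_inter.2 ⟨hF.2, hG.2⟩)]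
    · push Not at hstar
      obtain ⟨B, hBA, hcB, hB⟩ := exists_pairwiseDisjoint_of_mk_mem_le hc hcA hstar
      exact ⟨∅, B, hBA, hcB, fun F hF G hG hFG =>
        Finset.disjoint_iff_inter_eq_empty.1 (hB hF hG hFG)⟩

theorem exists_deltaSystem (hc : ℵ₀ ≤ c) {A : Set (Finset α)} (hA : c < #A) :
    ∃ R, ∃ B ⊆ A, c < #B ∧ B.Pairwise fun F G => F ∩ G = R := by
  obtain ⟨⟨n⟩, hn⟩ := exists_lt_mk_fiber hc hA (f := fun F => ULift.up.{u} F.card)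
    (mk_le_aleph0.trans hc)
  obtain ⟨R, B, hBA, hcB, hB⟩ :=
    exists_deltaSystem_of_forall_card_eq hc n _ (fun F hF => congrArg ULift.down hF.2) hn
  exact ⟨R, B, hBA.trans (sep_subset _ _), hcB, hB⟩

end DeltaSystem

theorem countable_setOf_forall_fst_mem {S β : Type*} [Countable β] (R : Finset S) :
    {P : Finset (S × β) | ∀ t ∈ P, t.1 ∈ R}.Countable := by
  have hT : (R ×ˢ Set.univ : Set (S × β)).Countable := R.countable_toSet.prod countable_univ
  refine ((countable_ofPred_finite_subset hT).preimage Finset.coe_injective).mono fun P hP => ?_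
  exact ⟨P.finite_toSet, fun t ht => mk_mem_prod (hP t ht) (mem_univ t.2)⟩

section BasicOpen

variable {S : Type (max u v)} {Y : Type v} [TopologicalSpace Y] [SecondCountableTopology Y]

def basicOpen (P : Finset (S × countableBasis Y)) : Set (S → Y) :=
  {x | ∀ t ∈ P, x t.1 ∈ (t.2 : Set Y)}

theorem basicOpen_anti {P Q : Finset (S × countableBasis Y)} (h : P ⊆ Q) :
    basicOpen Q ⊆ basicOpen P :=
  fun _ hx t ht => hx t (h ht)

theorem exists_basicOpen_subset {U : Set (S → Y)} (hU : IsOpen U) {p : S → Y} (hp : p ∈ U) :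
    ∃ P, p ∈ basicOpen P ∧ basicOpen P ⊆ U := by
  classical
  obtain ⟨I, u, hu, hIu⟩ := isOpen_pi_iff.1 hU p hp
  have hbasis : ∀ s ∈ I, ∃ V ∈ countableBasis Y, p s ∈ V ∧ V ⊆ u s := fun s hs =>
    (isBasis_countableBasis Y).exists_subset_of_mem_open (hu s hs).2 (hu s hs).1
  choose V hVB hpV hVu using hbasis
  refine ⟨I.attach.image fun s => (s.1, ⟨V s.1 s.2, hVB s.1 s.2⟩), ?_, fun x hx => hIu ?_⟩
  · simp only [basicOpen, Finset.mem_image, Finset.mem_attach, true_and]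
    rintro _ ⟨⟨s, hs⟩, rfl⟩
    exact hpV s hs
  · intro s hs
    exact hVu s hs (hx _ (Finset.mem_image.2 ⟨⟨s, hs⟩, Finset.mem_attach _ _, rfl⟩))

-- On `R` the point follows `q`; off `R` each coordinate lies in at most one support.
theorem exists_forall_mem_basicOpen [DecidableEq S] {ι : Type*}
    {P : ι → Finset (S × countableBasis Y)} {p : ι → S → Y} (hp : ∀ i, p i ∈ basicOpen (P i))
    {R : Finset S} (hR : Pairwise fun i j => (P i).image Prod.fst ∩ (P j).image Prod.fst ⊆ R)
    {q : S → Y} (hq : ∀ i, q ∈ basicOpen ((P i).filter fun t => t.1 ∈ R)) :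
    ∃ x, ∀ i, x ∈ basicOpen (P i) := by
  classical
  let x : S → Y := fun s =>
    if h : ∃ i, s ∈ (P i).image Prod.fst ∧ s ∉ R then p h.choose s else q s
  refine ⟨x, fun i t ht => ?_⟩
  by_cases htR : t.1 ∈ R
  · have hx : x t.1 = q t.1 := dif_neg fun ⟨_, _, h⟩ => h htR
    exact hx ▸ hq i t (Finset.mem_filter.2 ⟨ht, htR⟩)
  · have h : ∃ i, t.1 ∈ (P i).image Prod.fst ∧ t.1 ∉ R :=
      ⟨i, Finset.mem_image_of_mem _ ht, htR⟩
    have hi : h.choose = i := by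
      by_contra hne
      exact htR (hR hne (Finset.mem_inter.2 ⟨h.choose_spec.1, Finset.mem_image_of_mem _ ht⟩))
    have hx : x t.1 = p i t.1 := by simp only [x, dif_pos h, hi]
    exact hx ▸ hp i t ht

theorem exists_lt_mk_setOf_mem_basicOpen {c : Cardinal.{max u v}} (hc : ℵ₀ ≤ c)
    {𝔓 : Set (Finset (S × countableBasis Y))} (h𝔓 : c < #𝔓)
    (hne : ∀ P ∈ 𝔓, (basicOpen P).Nonempty) : ∃ x, c < #{P ∈ 𝔓 | x ∈ basicOpen P} := by
  classical
  have : Countable (countableBasis Y) := (countable_countableBasis Y).to_subtype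
  -- only countably many boxes share a support
  have hsupp : c < #((Finset.image Prod.fst) '' 𝔓) := by
    by_contra! h
    refine h𝔓.not_ge (mk_le_of_mk_image_le_of_mk_fiber_le hc h fun F => ?_)
    refine ((countable_setOf_forall_fst_mem F).mono ?_).le_aleph0.trans hc
    rintro P ⟨-, rfl⟩ t ht
    exact Finset.mem_image_of_mem _ ht
  obtain ⟨R, 𝔅, h𝔅, hc𝔅, hR⟩ := exists_deltaSystem hc hsupp
  have h𝔅' : ∀ F ∈ 𝔅, ∃ P ∈ 𝔓, P.image Prod.fst = F := fun F hF => h𝔅 hF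
  choose! P hP𝔓 hPsupp using h𝔅'
  obtain ⟨Q, hQ⟩ := exists_lt_mk_fiber hc hc𝔅 (f := fun F => (P F).filter fun t => t.1 ∈ R) <|
    ((countable_setOf_forall_fst_mem R).mono (by
      rintro _ ⟨F, -, rfl⟩ t ht
      exact (Finset.mem_filter.1 ht).2)).le_aleph0.trans hc
  set 𝔅' := {F ∈ 𝔅 | (P F).filter (fun t => t.1 ∈ R) = Q}
  obtain ⟨F₀, hF₀𝔅, hF₀Q⟩ : 𝔅'.Nonempty :=
    nonempty_coe_sort.1 (mk_ne_zero_iff.1 (zero_le.trans_lt hQ).ne')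
  have hq : (hne _ (hP𝔓 _ hF₀𝔅)).some ∈ basicOpen Q := hF₀Q ▸
    basicOpen_anti (Finset.filter_subset _ _) (hne _ (hP𝔓 _ hF₀𝔅)).some_mem
  obtain ⟨x, hx⟩ := exists_forall_mem_basicOpen (ι := 𝔅') (P := fun F => P F)
    (fun F => (hne _ (hP𝔓 _ F.2.1)).some_mem) (R := R)
    (fun F G hFG => by
      dsimp only
      rw [hPsupp _ F.2.1, hPsupp _ G.2.1]
      exact (hR F.2.1 G.2.1 (Subtype.coe_ne_coe.2 hFG)).le)
    fun F => by rw [F.2.2]; exact hq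
  refine ⟨x, hQ.trans_le ?_⟩
  have hinj : InjOn P 𝔅' := fun F hF G hG h => by
    rw [← hPsupp F hF.1, ← hPsupp G hG.1, h]
  rw [← mk_image_eq_of_injOn _ _ hinj]
  exact mk_le_mk_of_subset (by rintro _ ⟨F, hF, rfl⟩; exact ⟨hP𝔓 F hF.1, hx ⟨F, hF⟩⟩)

theorem propIII_pi {c : Cardinal.{max u v}} (hc : ℵ₀ ≤ c) : PropIII c (S → Y) := by
  intro I U hU hne hpt
  by_contra! hI
  choose p hpU using hne
  choose P hpP hPU using fun i => exists_basicOpen_subset (hU i) (hpU i)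
  -- all `U i` sharing one box `P i` contain a common point, so there are only `c` of them
  have hrange : c < #(range P) := by
    by_contra! h
    refine hI.not_ge (mk_univ.symm.trans_le ?_)
    refine mk_le_of_mk_image_le_of_mk_fiber_le hc (by rwa [image_univ]) fun Q => ?_
    rcases eq_empty_or_nonempty {i ∈ Set.univ | P i = Q} with h | ⟨i₀, -, hi₀⟩
    · rw [h]
      simp
    · exact (mk_le_mk_of_subset fun i hi => hPU i (hi.2 ▸ hi₀ ▸ hpP i₀)).trans (hpt (p i₀))
  obtain ⟨x, hx⟩ := exists_lt_mk_setOf_mem_basicOpen hc hrange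
    (forall_mem_range.2 fun i => ⟨p i, hpP i⟩)
  refine hx.not_ge <|
    (mk_le_mk_of_subset (t := P '' {i | x ∈ U i}) ?_).trans (mk_image_le.trans (hpt x))
  rintro _ ⟨⟨i, rfl⟩, hxi⟩
  exact ⟨i, hPU i hxi, rfl⟩

end BasicOpen

theorem mk_le_two_pow_of_dense_pi {S : Type (max u v)} {Y : Type v} [TopologicalSpace Y]
    [T2Space Y] [Nontrivial Y] {D : Set (S → Y)} (hD : Dense D) : #S ≤ 2 ^ #D := by
  classical
  obtain ⟨y, z, hyz⟩ := exists_pair_ne Y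
  obtain ⟨V, W, hV, hW, hyV, hzW, hVW⟩ := t2_separation hyz
  have hinj : Function.Injective fun s => {d : D | d.1 s ∈ V} := by
    intro s t hst
    by_contra hne
    obtain ⟨d, ⟨hds, hdt⟩, hdD⟩ := hD.inter_open_nonempty
      ({x | x s ∈ V} ∩ {x | x t ∈ W}) ((hV.preimage (continuous_apply s)).inter
        (hW.preimage (continuous_apply t)))
      ⟨fun r => if r = s then y else z, by simpa, by simpa [Ne.symm hne]⟩
    have : (⟨d, hdD⟩ : D) ∈ {d : D | d.1 t ∈ V} := (Set.ext_iff.1 hst _).1 hds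
    exact hVW.notMem_of_mem_left this hdt
  exact (mk_le_of_injective hinj).trans_eq mk_set

theorem stmt5 (c : Cardinal.{u}) (hc : Cardinal.aleph0 ≤ c)
    (S : Type u) (hS : 2 ^ c < #S) :
    PropIII c (S → (Set.Icc (0:ℝ) 1)) ∧
      ∀ D : Set (S → (Set.Icc (0:ℝ) 1)), Dense D → c < #D := by
  refine ⟨propIII_pi hc, fun D hD => ?_⟩
  by_contra! hD_le
  exact hS.not_ge ((mk_le_two_pow_of_dense_pi hD).trans (power_le_power_left two_ne_zero hD_le))
end

section
/- Let X = ∏_{s∈S} X_s be a product of topological spaces, Y a set, Z a Hausdorff space, and f : X × Y → Z a map that is continuous in the first variable (for each fixed y ∈ Y). Define S₀ = { s ∈ S : there exist y ∈ Y and u, v ∈ X with u and v agreeing on all coordinates except possibly s, and f(u,y) ≠ f(v,y) }. Then f is concentrated on S₀ with respect to the first variable (i.e., f(u,y) = f(v,y) whenever u and v agree on S₀), and S₀ is contained in every set T ⊆ S such that f is concentrated on T with respect to the first variable. -/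
universe u

open Cardinal

theorem stmt6 (S : Type u) (X : S → Type u) [∀ s, TopologicalSpace (X s)]
    (Y : Type u) (Z : Type u) [TopologicalSpace Z] [T2Space Z]
    (f : (∀ s, X s) → Y → Z)
    (hf : ∀ y, Continuous fun x => f x y) :
    (∀ u v : ∀ s, X s,
        (∀ s ∈ {s : S | ∃ (y : Y) (a b : ∀ t, X t),
            (∀ t, t ≠ s → a t = b t) ∧ f a y ≠ f b y}, u s = v s) →
        ∀ y, f u y = f v y) ∧
      ∀ T : Set S,
        (∀ u v : ∀ s, X s, (∀ s ∈ T, u s = v s) → ∀ y, f u y = f v y) →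
        {s : S | ∃ (y : Y) (a b : ∀ t, X t),
            (∀ t, t ≠ s → a t = b t) ∧ f a y ≠ f b y} ⊆ T := by
  classical
  set S₀ : Set S := {s : S | ∃ (y : Y) (a b : ∀ t, X t),
      (∀ t, t ≠ s → a t = b t) ∧ f a y ≠ f b y} with hS₀
  constructor
  · intro u v huv y
    -- the approximating net
    set w : Finset S → ∀ s, X s := fun F s => if s ∈ F then v s else u s with hw
    have hconst : ∀ F : Finset S, f (w F) y = f u y := by
      intro F
      induction F using Finset.induction_on with
      | empty => simp [hw]
      | @insert a F ha ih =>
        by_cases haS : a ∈ S₀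
        · have : w (insert a F) = w F := by
            funext t
            by_cases ht : t = a
            · subst ht
              simp [hw, ha, huv t haS]
            · simp [hw, Finset.mem_insert, ht]
          rw [this, ih]
        · have hkey : ∀ (y' : Y) (p q : ∀ t, X t),
              (∀ t, t ≠ a → p t = q t) → f p y' = f q y' := by
            simp only [hS₀, Set.mem_setOf_eq, not_exists] at haS
            intro y' p q hpq
            by_contra hne
            exact haS y' p q ⟨hpq, hne⟩
          have : f (w (insert a F)) y = f (w F) y := by
            apply hkey
            intro t ht
            simp [hw, Finset.mem_insert, ht]
          rw [this, ih]
    have htend : Filter.Tendsto w Filter.atTop (nhds v) := by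
      rw [tendsto_pi_nhds]
      intro s
      apply Filter.Tendsto.congr' _ tendsto_const_nhds
      filter_upwards [Filter.eventually_ge_atTop ({s} : Finset S)] with F hF
      have : s ∈ F := hF (Finset.mem_singleton_self s)
      simp [hw, this]
    have h1 : Filter.Tendsto (fun F => f (w F) y) Filter.atTop (nhds (f v y)) :=
      ((hf y).tendsto v).comp htend
    have h2 : Filter.Tendsto (fun F => f (w F) y) Filter.atTop (nhds (f u y)) := by
      simp only [hconst]
      exact (tendsto_const_nhds :
        Filter.Tendsto (fun _ : Finset S => f u y) Filter.atTop (nhds (f u y)))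
    exact tendsto_nhds_unique h2 h1
  · intro T hT s hs
    by_contra hsT
    obtain ⟨y, a, b, hab, hne⟩ := hs
    exact hne (hT a b (fun t ht => hab t (fun h => hsT (h ▸ ht))) y)
end

section
/- Let ℵ be an infinite cardinal, X = ∏_{s∈S} X_s a topological product with property (I_ℵ), and let Y₁, …, Yₙ be topological spaces each having property (III_ℵ). Then every separately continuous function f : X × Y₁ × ⋯ × Yₙ → ℝ depends on at most ℵ coordinates with respect to the first variable; that is, there exists T ⊆ S with |T| ≤ ℵ such that f(u, y₁,…,yₙ) = f(v, y₁,…,yₙ) whenever u|_T = v|_T. -/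
universe u

open Cardinal

/-!
If no set of at most `ℵ` coordinates works, counterexamples can be chosen along a well-order of
length `ℵ⁺`, each one differing only on coordinates not used by the earlier ones; they produce
`ℵ⁺` nonempty open sets. For a single continuous function on `∏ X_s` (Noble–Ulmer) the
counterexamples differ on finitely many coordinates, and the sets where patching in these
coordinates moves `f` by more than `ε / 2` form a locally finite family, contradicting `(I_ℵ)`.
For separately continuous `f` we induct on `n`: the slices at the points `z` of the last factor
depend on sets `T_z` of at most `ℵ` coordinates, the counterexamples differ inside the `T_z`,
and the sets `{z | f (u_α, w_α, z) ≠ f (v_α, w_α, z)}` form an `ℵ`-pointwise family,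
contradicting `(III_ℵ)`.
-/

open Set Filter Topology

section TransfiniteSelection

variable {c : Cardinal.{u}} {S : Type u}

theorem exists_seq_of_forall_mk_le (hc : ℵ₀ ≤ c) {P : Type*} (D : P → Set S)
    (hD : ∀ p, #(D p) ≤ c) (Q : Set S → P → Prop) (hQ : ∀ T : Set S, #T ≤ c → ∃ p, Q T p) :
    ∃ (I : Type u) (_ : LinearOrder I), c < #I ∧
      ∃ F : I → P, ∀ α, Q (⋃ β < α, D (F β)) (F α) := by
  obtain ⟨p₀, -⟩ := hQ ∅ (by simp)
  have : Nonempty P := ⟨p₀⟩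
  let I := (Order.succ c).ord.ToType
  let F : I → P := wellFounded_lt.fix fun α F ↦
    Classical.epsilon (Q (⋃ (β) (h : β < α), D (F β h)))
  have hF (α : I) : F α = Classical.epsilon (Q (⋃ β < α, D (F β))) :=
    wellFounded_lt.fix_eq _ _
  refine ⟨I, inferInstance, by simp [I], F, fun α ↦ ?_⟩
  rw [hF α]
  refine Classical.epsilon_spec (hQ _ ?_)
  have hIio : #(Iio α) ≤ c := Order.lt_succ_iff.mp (by simpa [I] using mk_Iio_lt α)
  exact (mk_biUnion_le _ (Iio α)).trans (mul_le_of_le hc hIio (ciSup_le' fun β ↦ hD _))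

theorem mk_setOf_inter_diff_biUnion_nonempty_le {I : Type u} [LinearOrder I] (D : I → Set S)
    (K : Set S) : #{α | (K ∩ (D α \ ⋃ β < α, D β)).Nonempty} ≤ #K := by
  choose g hgK hgD hg using fun α : {α | (K ∩ (D α \ ⋃ β < α, D β)).Nonempty} ↦ α.2
  have hlt (α β) (h : g α = g β) : ¬ α.1 < β.1 := fun hαβ ↦
    hg β (mem_biUnion hαβ (h ▸ hgD α))
  exact mk_le_of_injective (f := fun α ↦ (⟨g α, hgK α⟩ : K)) fun α β h ↦
    Subtype.ext (le_antisymm (not_lt.mp (hlt β α (congrArg Subtype.val h).symm))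
      (not_lt.mp (hlt α β (congrArg Subtype.val h))))

end TransfiniteSelection

section NobleUlmer

variable {S : Type u} {R : Type*}

theorem ContinuousAt.exists_finset_nhds_forall_eqOn_dist_lt [PseudoMetricSpace R]
    {X : S → Type*} [∀ s, TopologicalSpace (X s)] {f : (∀ s, X s) → R} {x : ∀ s, X s}
    (hf : ContinuousAt f x) {δ : ℝ} (hδ : 0 < δ) :
    ∃ K : Finset S, ∃ N ∈ 𝓝 x, ∀ z ∈ N, ∀ w, (∀ s ∈ K, w s = z s) → dist (f w) (f x) < δ := by
  have hball : f ⁻¹' Metric.ball (f x) δ ∈ 𝓝 x := hf (Metric.ball_mem_nhds _ hδ)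
  rw [nhds_pi, mem_pi'] at hball
  obtain ⟨K, t, ht, hKt⟩ := hball
  refine ⟨K, (K : Set S).pi t, set_pi_mem_nhds K.finite_toSet fun s _ ↦ ht s,
    fun z hz w hwz ↦ hKt fun s hs ↦ ?_⟩
  rw [hwz s hs]
  exact hz s hs

theorem ContinuousAt.exists_finset_lt_dist_piecewise [PseudoMetricSpace R] [DecidableEq S]
    {X : S → Type*} [∀ s, TopologicalSpace (X s)] {f : (∀ s, X s) → R} {u v : ∀ s, X s}
    (hf : ContinuousAt f v) {ε : ℝ} (h : ε < dist (f u) (f v)) :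
    ∃ G : Finset S, ε < dist (f u) (f (G.piecewise v u)) := by
  obtain ⟨G, N, hN, hG⟩ := hf.exists_finset_nhds_forall_eqOn_dist_lt (sub_pos.mpr h)
  have hGv : dist (f (G.piecewise v u)) (f v) < dist (f u) (f v) - ε :=
    hG v (mem_of_mem_nhds hN) _ fun s hs ↦ G.piecewise_eq_of_mem _ _ hs
  exact ⟨G, by linarith [dist_triangle (f u) (f (G.piecewise v u)) (f v)]⟩

variable {c : Cardinal.{u}} {X : S → Type u} [∀ s, TopologicalSpace (X s)]

theorem PropI.exists_mk_le_forall_eqOn_dist_le [PseudoMetricSpace R] (hX : PropI c (∀ s, X s))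
    (hc : ℵ₀ ≤ c) {f : (∀ s, X s) → R} (hf : Continuous f) {ε : ℝ} (hε : 0 < ε) :
    ∃ T : Set S, #T ≤ c ∧ ∀ u v : ∀ s, X s, (∀ s ∈ T, u s = v s) → dist (f u) (f v) ≤ ε := by
  classical
  by_contra! hfail
  obtain ⟨I, _, hI, F, hF⟩ := exists_seq_of_forall_mk_le hc
    (fun p : (∀ s, X s) × (∀ s, X s) × Finset S ↦ (p.2.2 : Set S))
    (fun p ↦ (finset_card_lt_aleph0 _).le.trans hc)
    (fun T p ↦ (∀ s ∈ T, p.1 s = p.2.1 s) ∧ (∀ s ∉ p.2.2, p.1 s = p.2.1 s) ∧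
      ε < dist (f p.1) (f p.2.1)) fun T hT ↦ by
    obtain ⟨u, v, huv, hε⟩ := hfail T hT
    obtain ⟨G, hG⟩ := hf.continuousAt.exists_finset_lt_dist_piecewise hε
    refine ⟨(u, G.piecewise v u, G), fun s hs ↦ ?_,
      fun s hs ↦ (G.piecewise_eq_of_notMem _ _ hs).symm, hG⟩
    by_cases hsG : s ∈ G <;> simp [hsG, huv s hs]
  let E (α : I) : Set S := ↑(F α).2.2 \ ⋃ β < α, ↑(F β).2.2
  let patch (α : I) (x : ∀ s, X s) : ∀ s, X s := (E α).piecewise (F α).2.1 x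
  have hpatch (α : I) : Continuous (patch α) := continuous_pi fun s ↦ by
    by_cases hs : s ∈ E α
    · simpa [patch, hs] using continuous_const
    · simpa [patch, hs] using continuous_apply s
  have hpatch_fst (α : I) : patch α (F α).1 = (F α).2.1 := funext fun s ↦ by
    by_cases hs : s ∈ E α
    · simp [patch, hs]
    · have hsT : s ∈ (F α).2.2 → s ∈ ⋃ β < α, ↑(F β).2.2 := by simpa [E] using hs
      by_cases hsG : s ∈ (F α).2.2
      · simpa [patch, hs] using (hF α).1 s (hsT hsG)
      · simpa [patch, hs] using (hF α).2.1 s hsG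
  let W (α : I) : Set (∀ s, X s) := {x | ε / 2 < dist (f x) (f (patch α x))}
  refine hI.not_ge (hX I W (fun α ↦ isOpen_lt continuous_const (hf.dist (hf.comp (hpatch α))))
    (fun α ↦ ⟨(F α).1, ?_⟩) fun x ↦ ?_)
  · show ε / 2 < dist (f (F α).1) (f (patch α (F α).1))
    rw [hpatch_fst]
    linarith [(hF α).2.2]
  · obtain ⟨K, N, hN, hK⟩ := hf.continuousAt.exists_finset_nhds_forall_eqOn_dist_lt
      (by positivity : 0 < ε / 4)
    refine ⟨N, hN, Finite.subset (lt_aleph0_iff_set_finite.mp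
      ((mk_setOf_inter_diff_biUnion_nonempty_le (fun α ↦ ↑(F α).2.2) (K : Set S)).trans_lt
        (finset_card_lt_aleph0 K))) fun α ⟨z, hzW, hzN⟩ ↦ ?_⟩
    -- if `E α` misses `K`, then `patch α z` stays in the cylinder around `x`
    by_contra hKE
    have hpatch_K : ∀ s ∈ K, patch α z s = z s := fun s hs ↦
      (E α).piecewise_eq_of_notMem _ _ fun hsE ↦ hKE ⟨s, hs, hsE⟩
    have h₁ := hK z hzN z fun _ _ ↦ rfl
    have h₂ := hK z hzN _ hpatch_K
    have : ε / 2 < dist (f z) (f (patch α z)) := hzW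
    linarith [dist_triangle_right (f z) (f (patch α z)) (f x)]

theorem PropI.exists_mk_le_forall_eqOn_eq [MetricSpace R] (hX : PropI c (∀ s, X s))
    (hc : ℵ₀ ≤ c) {f : (∀ s, X s) → R} (hf : Continuous f) :
    ∃ T : Set S, #T ≤ c ∧ ∀ u v : ∀ s, X s, (∀ s ∈ T, u s = v s) → f u = f v := by
  choose T hTc hT using fun m : ℕ ↦
    hX.exists_mk_le_forall_eqOn_dist_le hc hf (Nat.one_div_pos_of_nat (n := m))
  refine ⟨⋃ m, T m, ?_, fun u v huv ↦ eq_of_forall_dist_le fun ε hε ↦ ?_⟩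
  · have := mk_iUnion_le_lift T
    simp only [lift_uzero, mk_nat, lift_aleph0] at this
    exact this.trans (mul_le_of_le hc hc (ciSup_le' hTc))
  · obtain ⟨m, hm⟩ := exists_nat_one_div_lt hε
    exact (hT m u v fun s hs ↦ huv s (mem_iUnion_of_mem m hs)).trans hm.le

end NobleUlmer

theorem PropIII.exists_mk_le_forall_eqOn_eq_of_slices {c : Cardinal.{u}} (hc : ℵ₀ ≤ c)
    {S : Type u} {X : S → Type*} {W : Type*} {Z : Type u} [TopologicalSpace Z]
    (hZ : PropIII c Z) {R : Type*} [TopologicalSpace R] [T2Space R]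
    {f : (∀ s, X s) → W → Z → R} (hf : ∀ x w, Continuous (f x w))
    (hslice : ∀ z, ∃ T : Set S, #T ≤ c ∧
      ∀ (u v : ∀ s, X s) (w : W), (∀ s ∈ T, u s = v s) → f u w z = f v w z) :
    ∃ T : Set S, #T ≤ c ∧
      ∀ (u v : ∀ s, X s) (w : W) (z : Z), (∀ s ∈ T, u s = v s) → f u w z = f v w z := by
  classical
  choose Tz hTzc hTz using hslice
  by_contra! hfail
  obtain ⟨I, _, hI, F, hF⟩ := exists_seq_of_forall_mk_le hc
    (fun p : (∀ s, X s) × (∀ s, X s) × W × Z ↦ Tz p.2.2.2) (fun p ↦ hTzc _)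
    (fun T p ↦ (∀ s ∈ T, p.1 s = p.2.1 s) ∧ (∀ s ∉ Tz p.2.2.2, p.1 s = p.2.1 s) ∧
      f p.1 p.2.2.1 p.2.2.2 ≠ f p.2.1 p.2.2.1 p.2.2.2) fun T hT ↦ by
    obtain ⟨u, v, w, z, huv, hne⟩ := hfail T hT
    -- the slice at `z` does not see the coordinates outside `Tz z`, so we may copy `u` there
    refine ⟨(u, (Tz z).piecewise v u, w, z), fun s hs ↦ ?_,
      fun s hs ↦ ((Tz z).piecewise_eq_of_notMem _ _ hs).symm, fun h ↦ hne (h.trans ?_)⟩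
    · by_cases hsz : s ∈ Tz z <;> simp [hsz, huv s hs]
    · exact hTz z _ _ w fun s hs ↦ (Tz z).piecewise_eq_of_mem _ _ hs
  let V (α : I) : Set Z := {z | f (F α).1 (F α).2.2.1 z ≠ f (F α).2.1 (F α).2.2.1 z}
  refine hI.not_ge (hZ I V (fun α ↦ isOpen_ne_fun (hf _ _) (hf _ _))
    (fun α ↦ ⟨_, (hF α).2.2⟩) fun z ↦ ?_)
  refine (mk_le_mk_of_subset fun α hα ↦ ?_).trans
    ((mk_setOf_inter_diff_biUnion_nonempty_le (fun α ↦ Tz (F α).2.2.2) (Tz z)).trans (hTzc z))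
  obtain ⟨s, hsz, hs⟩ : ∃ s ∈ Tz z, (F α).1 s ≠ (F α).2.1 s := by
    by_contra! h
    exact hα (hTz z _ _ _ h)
  exact ⟨s, hsz, not_not.mp (mt ((hF α).2.1 s) hs), fun hsT ↦ hs ((hF α).1 s hsT)⟩

theorem stmt7 (c : Cardinal.{u}) (hc : Cardinal.aleph0 ≤ c)
    (S : Type u) (X : S → Type u) [∀ s, TopologicalSpace (X s)]
    (n : ℕ) (Y : Fin n → Type u) [∀ i, TopologicalSpace (Y i)]
    (hX : PropI c (∀ s, X s)) (hY : ∀ i, PropIII c (Y i))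
    (f : (∀ s, X s) × (∀ i, Y i) → ℝ)
    (hf1 : ∀ y, Continuous fun x : ∀ s, X s => f (x, y))
    (hf2 : ∀ (x : ∀ s, X s) (i : Fin n) (y : ∀ j, Y j),
      Continuous fun yi : Y i => f (x, Function.update y i yi)) :
    ∃ T : Set S, #T ≤ c ∧
      ∀ (u v : ∀ s, X s) (y : ∀ i, Y i),
        (∀ s ∈ T, u s = v s) → f (u, y) = f (v, y) := by
  induction n with
  | zero =>
    obtain ⟨T, hTc, hT⟩ := hX.exists_mk_le_forall_eqOn_eq hc (hf1 isEmptyElim)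
    exact ⟨T, hTc, fun u v y huv ↦ Subsingleton.elim isEmptyElim y ▸ hT u v huv⟩
  | succ n ih =>
    have hslice (z : Y (Fin.last n)) := ih (fun i ↦ Y i.castSucc) (fun i ↦ hY _)
      (fun p ↦ f (p.1, Fin.snoc p.2 z)) (fun w ↦ hf1 (Fin.snoc w z)) fun x i w ↦ by
        simpa only [Fin.snoc_update] using hf2 x i.castSucc (Fin.snoc w z)
    obtain ⟨T, hTc, hT⟩ := (hY (Fin.last n)).exists_mk_le_forall_eqOn_eq_of_slices hc
      (f := fun x y z ↦ f (x, Function.update y (Fin.last n) z)) (hf2 · (Fin.last n) ·)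
      fun z ↦ (hslice z).imp fun T ⟨hTc, hT⟩ ↦ ⟨hTc, fun u v y huv ↦ by
        rw [← Fin.snoc_init_self y, Fin.update_snoc_last]
        exact hT u v (Fin.init y) huv⟩
    exact ⟨T, hTc, fun u v y huv ↦ by
      simpa only [Function.update_eq_self] using hT u v y (y (Fin.last n)) huv⟩
end

section
/- Let ℵ be an infinite cardinal and suppose each topological product X_i = ∏_{s∈S_i} X_{i,s}, i = 1,…,n, has property (III_ℵ). Then every separately continuous function f : X₁ × ⋯ × Xₙ → ℝ depends on at most ℵ coordinates: for each i there is T_i ⊆ S_i with |T_i| ≤ ℵ such that f(x) = f(x') whenever x_i|_{T_i} = x'_i|_{T_i} for all i. -/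
universe u

open Cardinal

/-! Take `T i` to be the coordinates `s ∈ S i` whose change alone can change `f`.

To bound `#(T i)`, fix `ε > 0` and let all factors except `i` and a finite set `A` of others be
pinned. For `A = ∅` we are looking at a continuous function `g` on `X i`; a point has a basic
neighbourhood restricting only finitely many coordinates, so the open sets "changing the `s`-th
coordinate moves `g` by more than `ε / 2`" form a pointwise finite family, which (III_ℵ) bounds.
Freeing one more factor `j`, the analogous open sets lie in `X j`, and those containing `t` are
counted by the induction hypothesis with `j` pinned at `t` and `ε` halved.

That `f` depends only on the `T i`: a continuous function on a product that is unchanged by each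
single coordinate outside `T` is unchanged by finite modifications off `T`, which are dense; by
separate continuity this applies to each factor, and the factors are changed one at a time. -/

theorem PropIII.mk_le_of_continuous {c : Cardinal.{u}} {Y : Type u} [TopologicalSpace Y]
    (hY : PropIII c Y) {E : Type u} (φ : E → Y → ℝ) (hφ : ∀ e, Continuous (φ e)) {δ : ℝ}
    (hne : ∀ e, ∃ y, δ < |φ e y|) (hpt : ∀ y, #{e | δ < |φ e y|} ≤ c) : #E ≤ c :=
  hY E (fun e => {y | δ < |φ e y|}) (fun e => isOpen_lt continuous_const (hφ e).abs) hne hpt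

theorem Continuous.exists_finset_dist_update_lt {σ β : Type*} {Y : σ → Type*}
    [∀ s, TopologicalSpace (Y s)] [DecidableEq σ] [PseudoMetricSpace β]
    {g : (∀ s, Y s) → β} (hg : Continuous g) (w : ∀ s, Y s) {δ : ℝ} (hδ : 0 < δ) :
    ∃ I : Finset σ, ∀ s ∉ I, ∀ b, dist (g (Function.update w s b)) (g w) < δ := by
  obtain ⟨I, t, hwt, hsub⟩ :=
    isOpen_pi_iff.mp (Metric.isOpen_ball.preimage hg) w (Metric.mem_ball_self hδ)
  refine ⟨I, fun s hs b => hsub fun r hr => ?_⟩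
  rw [Function.update_of_ne (ne_of_mem_of_not_mem hr hs)]
  exact (hwt r hr).2

theorem Continuous.mk_oscillation_le {c : Cardinal.{u}} (hc : ℵ₀ ≤ c) {σ : Type u}
    {Y : σ → Type u} [∀ s, TopologicalSpace (Y s)] [DecidableEq σ]
    (hY : PropIII c (∀ s, Y s)) {g : (∀ s, Y s) → ℝ} (hg : Continuous g) {ε : ℝ} (hε : 0 < ε) :
    #{s | ∃ z b, ε ≤ |g (Function.update z s b) - g z|} ≤ c := by
  set E := {s | ∃ z b, ε ≤ |g (Function.update z s b) - g z|}
  choose z b hzb using fun e : E => e.2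
  let φ (e : E) (w : ∀ s, Y s) := g (Function.update w e (b e)) - g (Function.update w e (z e e))
  refine hY.mk_le_of_continuous φ (δ := ε / 2) (fun e => ?_) (fun e => ⟨z e, ?_⟩) fun w => ?_
  · fun_prop
  · simpa [φ] using (half_lt_self hε).trans_le (hzb e)
  · obtain ⟨I, hI⟩ := hg.exists_finset_dist_update_lt w (div_pos hε four_pos)
    have hsub : {e : E | ε / 2 < |φ e w|} ⊆ Subtype.val ⁻¹' I := fun e he => by
      by_contra hs
      have := (dist_triangle_right _ _ (g w)).trans_lt
        (add_lt_add (hI e hs (b e)) (hI e hs (z e e)))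
      rw [Real.dist_eq] at this
      exact he.out.not_gt (by linarith)
    exact ((I.finite_toSet.preimage Subtype.val_injective.injOn).subset hsub).lt_aleph0.le.trans hc

theorem apply_eq_of_forall_update_eq {ι β : Type*} {Y : ι → Type*} [DecidableEq ι]
    {g : (∀ i, Y i) → β} (F : Finset ι) {u v : ∀ i, Y i} (huv : ∀ i ∉ F, u i = v i)
    (h : ∀ i ∈ F, ∀ z, g (Function.update z i (u i)) = g (Function.update z i (v i))) :
    g u = g v := by
  induction F using Finset.induction_on generalizing u with
  | empty => exact congrArg g (funext fun i => huv i (Finset.notMem_empty i))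
  | @insert a F ha IH =>
    calc g u = g (Function.update u a (v a)) := by simpa using h a (F.mem_insert_self a) u
      _ = g v := by
        refine IH (fun i hi => ?_) fun i hi z => ?_
        · rcases eq_or_ne i a with rfl | hia
          · simp
          · simpa [hia] using huv i (by simp [hia, hi])
        · simpa [ne_of_mem_of_not_mem hi ha] using h i (Finset.mem_insert_of_mem hi) z

theorem Continuous.dependsOn_essential {σ β : Type*} {Y : σ → Type*}
    [∀ s, TopologicalSpace (Y s)] [DecidableEq σ] [TopologicalSpace β] [T1Space β]
    {g : (∀ s, Y s) → β} (hg : Continuous g) :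
    DependsOn g {s | ∃ z b, g (Function.update z s b) ≠ g z} := by
  intro u v huv
  suffices v ∈ closure {w | g w = g u} from
    ((isClosed_singleton.preimage hg).closure_eq ▸ this).symm
  refine mem_closure_iff.mpr fun o ho hvo => ?_
  obtain ⟨I, t, hvt, hsub⟩ := isOpen_pi_iff.mp ho v hvo
  refine ⟨I.piecewise v u, hsub fun s hs => ?_, ?_⟩
  · rw [I.piecewise_eq_of_mem _ _ hs]
    exact (hvt s hs).2
  · refine apply_eq_of_forall_update_eq I (fun s hs => by simp [hs]) fun s hs z => ?_
    by_cases hus : u s = v s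
    · simp [hs, hus]
    · have inert : ∀ z b, g (Function.update z s b) = g z := by
        by_contra! hne
        exact hus (huv s hne)
      rw [inert, inert]

section Factors

open scoped Classical

variable {n : ℕ} {S : Fin n → Type u} {X : ∀ i, S i → Type u}

noncomputable def updateCoord (x : ∀ i s, X i s) (i : Fin n) (s : S i) (b : X i s) : ∀ i s, X i s :=
  Function.update x i (Function.update (x i) s b)

def essentialCoords (f : (∀ i s, X i s) → ℝ) (i : Fin n) : Set (S i) :=
  {s | ∃ x b, f (updateCoord x i s b) ≠ f x}

def oscillationSet (f : (∀ i s, X i s) → ℝ) (i : Fin n) (A : Finset (Fin n))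
    (p : ∀ i s, X i s) (ε : ℝ) : Set (S i) :=
  {s | ∃ x b, (∀ j, j ≠ i → j ∉ A → x j = p j) ∧ ε ≤ |f (updateCoord x i s b) - f x|}

theorem updateCoord_update_of_ne (x : ∀ i s, X i s) {i j : Fin n} (hji : j ≠ i) (s : S i)
    (b : X i s) (t : ∀ s, X j s) :
    updateCoord (Function.update x j t) i s b = Function.update (updateCoord x i s b) j t := by
  rw [updateCoord, updateCoord, Function.update_of_ne hji.symm, Function.update_comm hji.symm]

variable [∀ i s, TopologicalSpace (X i s)] {c : Cardinal.{u}} {f : (∀ i s, X i s) → ℝ}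

theorem mk_oscillationSet_le (hc : ℵ₀ ≤ c) (hX : ∀ i, PropIII c (∀ s, X i s))
    (hf : ∀ i x, Continuous fun xi : ∀ s, X i s => f (Function.update x i xi))
    (i : Fin n) (A : Finset (Fin n)) (hiA : i ∉ A) (p : ∀ i s, X i s) {ε : ℝ} (hε : 0 < ε) :
    #(oscillationSet f i A p ε) ≤ c := by
  induction A using Finset.induction_on generalizing p ε with
  | empty =>
    refine (Cardinal.mk_le_mk_of_subset ?_).trans ((hf i p).mk_oscillation_le hc (hX i) hε)
    rintro s ⟨x, b, hxp, hxb⟩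
    have hx : ∀ z, Function.update p i z = Function.update x i z := fun z => by
      ext1 j
      rcases eq_or_ne j i with rfl | hji
      · simp
      · simp [hji, hxp j hji (Finset.notMem_empty j)]
    refine ⟨x i, b, ?_⟩
    simpa [hx, updateCoord] using hxb
  | @insert j A _ IH =>
    have hji : j ≠ i := fun h => hiA (h ▸ A.mem_insert_self j)
    choose x b hxp hxb using fun e : oscillationSet f i (insert j A) p ε => e.2
    let φ (e : oscillationSet f i (insert j A) p ε) (t : ∀ s, X j s) :=
      f (Function.update (updateCoord (x e) i e (b e)) j t) - f (Function.update (x e) j t)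
    refine (hX j).mk_le_of_continuous φ (δ := ε / 2) (fun e => (hf j _).sub (hf j _))
      (fun e => ⟨x e j, ?_⟩) fun t => ?_
    · have hxj : Function.update (updateCoord (x e) i e (b e)) j (x e j) =
          updateCoord (x e) i e (b e) :=
        Function.update_eq_iff.mpr ⟨(Function.update_of_ne hji _ _).symm, fun _ _ => rfl⟩
      simpa [φ, hxj] using (half_lt_self hε).trans_le (hxb e)
    · refine (Cardinal.mk_le_mk_of_subset ?_).trans ((Cardinal.mk_preimage_of_injective _ _
        Subtype.val_injective).trans (IH (fun h => hiA (Finset.mem_insert_of_mem h))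
          (Function.update p j t) (half_pos hε)))
      intro e he
      refine ⟨Function.update (x e) j t, b e, fun k hki hkA => ?_, ?_⟩
      · rcases eq_or_ne k j with rfl | hkj
        · simp
        · simpa [hkj] using hxp e k hki (by simp [hkj, hkA])
      · rw [updateCoord_update_of_ne _ hji]
        exact he.out.le

theorem mk_essentialCoords_le (hc : ℵ₀ ≤ c) (hX : ∀ i, PropIII c (∀ s, X i s))
    (hf : ∀ i x, Continuous fun xi : ∀ s, X i s => f (Function.update x i xi)) (i : Fin n) :
    #(essentialCoords f i) ≤ c := by
  rcases isEmpty_or_nonempty (∀ i s, X i s) with _ | ⟨⟨p⟩⟩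
  · simp [essentialCoords]
  have hsub : essentialCoords f i ⊆
      ⋃ k : ℕ, oscillationSet f i (Finset.univ.erase i) p (1 / (k + 1)) := by
    rintro s ⟨x, b, hxb⟩
    obtain ⟨k, hk⟩ := exists_nat_one_div_lt (abs_pos.mpr (sub_ne_zero.mpr hxb))
    exact Set.mem_iUnion.mpr ⟨k, x, b, fun j hji hj => absurd (by simp [hji]) hj, hk.le⟩
  have hunion := Cardinal.mk_iUnion_le_lift.{u, 0}
    fun k : ℕ => oscillationSet f i (Finset.univ.erase i) p (1 / (k + 1))
  simp only [Cardinal.lift_uzero, Cardinal.mk_nat, Cardinal.lift_aleph0] at hunion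
  calc #(essentialCoords f i) ≤ ℵ₀ * ⨆ k : ℕ, #(oscillationSet f i _ p (1 / (k + 1))) :=
        (Cardinal.mk_le_mk_of_subset hsub).trans hunion
    _ ≤ ℵ₀ * c := by
        gcongr
        exact ciSup_le' fun k => mk_oscillationSet_le hc hX hf i _ (Finset.notMem_erase i _) p
          Nat.one_div_pos_of_nat
    _ = c := Cardinal.aleph0_mul_eq hc

end Factors

theorem stmt8 (c : Cardinal.{u}) (hc : Cardinal.aleph0 ≤ c)
    (n : ℕ) (S : Fin n → Type u) (X : ∀ i, S i → Type u)
    [∀ i s, TopologicalSpace (X i s)]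
    (hX : ∀ i, PropIII c (∀ s, X i s))
    (f : (∀ i, ∀ s, X i s) → ℝ)
    (hf : ∀ (i : Fin n) (x : ∀ j, ∀ s, X j s),
      Continuous fun xi : ∀ s, X i s => f (Function.update x i xi)) :
    ∃ T : ∀ i, Set (S i), (∀ i, #(T i) ≤ c) ∧
      ∀ u v : ∀ i, ∀ s, X i s,
        (∀ i, ∀ s ∈ T i, u i s = v i s) → f u = f v := by
  classical
  refine ⟨essentialCoords f, mk_essentialCoords_le hc hX hf, fun u v huv => ?_⟩
  refine apply_eq_of_forall_update_eq Finset.univ (by simp) fun i _ z =>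
    (hf i z).dependsOn_essential ?_
  rintro s ⟨y, b, hyb⟩
  refine huv i s ⟨Function.update z i y, b, ?_⟩
  simpa [updateCoord] using hyb
end

section
/- Let ℵ be an infinite cardinal, X = ∏_{s∈S} X_s a product with property (III_ℵ), and Y a topological space with property (III_ℵ). Then every separately continuous function f : X × Y → ℝ depends on at most ℵ coordinates with respect to the first variable. -/
universe u

open Cardinal

section aux
open Function Set Filter Topology
variable {S : Type u} [DecidableEq S] {X : S → Type u} [∀ s, TopologicalSpace (X s)]

lemma finite_big_diff (g : (∀ s, X s) → ℝ) (hg : Continuous g) (x : ∀ s, X s)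
    {ε : ℝ} (hε : 0 < ε) :
    {s : S | ∃ a : X s, ε ≤ |g (Function.update x s a) - g x|}.Finite := by
  have h1 : {z | |g z - g x| < ε} ∈ 𝓝 x := by
    have hcont : Continuous fun z => |g z - g x| := (hg.sub continuous_const).abs
    have : IsOpen {z | |g z - g x| < ε} := isOpen_lt hcont continuous_const
    exact this.mem_nhds (by simpa using hε)
  rw [nhds_pi, Filter.mem_pi] at h1
  obtain ⟨I, hI, V, hV, hIV⟩ := h1
  refine hI.subset ?_
  intro s hs
  obtain ⟨a, ha⟩ := hs
  by_contra hsI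
  have hmem : Function.update x s a ∈ I.pi V := by
    intro t ht
    rw [Function.update_of_ne (fun h : t = s => hsI (h ▸ ht))]
    exact mem_of_mem_nhds (hV t)
  have := hIV hmem
  simp only [Set.mem_setOf_eq] at this
  linarith

lemma countable_diff (g : (∀ s, X s) → ℝ) (hg : Continuous g) (x : ∀ s, X s) :
    {s : S | ∃ a : X s, g (Function.update x s a) ≠ g x}.Countable := by
  have hsub : {s : S | ∃ a : X s, g (Function.update x s a) ≠ g x} ⊆
      ⋃ n : ℕ, {s : S | ∃ a : X s, 1/(n+1) ≤ |g (Function.update x s a) - g x|} := by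
    rintro s ⟨a, ha⟩
    have hpos : 0 < |g (Function.update x s a) - g x| := abs_pos.2 (sub_ne_zero.2 ha)
    obtain ⟨n, hn⟩ := exists_nat_one_div_lt hpos
    exact Set.mem_iUnion.2 ⟨n, ⟨a, hn.le⟩⟩
  refine Set.Countable.mono hsub ?_
  refine Set.countable_iUnion fun n => ?_
  exact (finite_big_diff g hg x (by positivity)).countable

lemma eq_of_finset (g : (∀ s, X s) → ℝ) (E : Set S)
    (hE : ∀ s ∉ E, ∀ (z : ∀ t, X t) (a : X s), g (Function.update z s a) = g z)
    (G : Finset S) :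
    ∀ z v : ∀ s, X s, (∀ t ∉ G, z t = v t) → (∀ t ∈ G, t ∉ E ∨ z t = v t) → g z = g v := by
  induction G using Finset.induction_on with
  | empty =>
    intro z v h _
    exact congrArg g (funext fun t => h t (by simp))
  | @insert s G hs ih =>
    intro z v h hG
    have h1 : g z = g (Function.update z s (v s)) := by
      rcases hG s (Finset.mem_insert_self s G) with hsE | hzv
      · exact (hE s hsE z (v s)).symm
      · rw [← hzv, Function.update_eq_self]
    rw [h1]
    refine ih (Function.update z s (v s)) v ?_ ?_
    · intro t ht
      by_cases hts : t = s
      · subst hts; simp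
      · rw [Function.update_of_ne hts]
        exact h t (by simp [ht, hts])
    · intro t ht
      have hts : t ≠ s := fun h' => hs (h' ▸ ht)
      rw [Function.update_of_ne hts]
      exact hG t (Finset.mem_insert_of_mem ht)

lemma eq_of_agree (g : (∀ s, X s) → ℝ) (hg : Continuous g) (E : Set S)
    (hE : ∀ s ∉ E, ∀ (z : ∀ t, X t) (a : X s), g (Function.update z s a) = g z)
    (u v : ∀ s, X s) (huv : ∀ s ∈ E, u s = v s) : g u = g v := by
  by_contra hne
  have hε : 0 < |g u - g v| := abs_pos.2 (sub_ne_zero.2 hne)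
  have h1 : {z | |g z - g u| < |g u - g v|} ∈ 𝓝 u := by
    have hcont : Continuous fun z => |g z - g u| := (hg.sub continuous_const).abs
    exact (isOpen_lt hcont continuous_const).mem_nhds (by simpa using hε)
  rw [nhds_pi, Filter.mem_pi] at h1
  obtain ⟨I, hI, V, hV, hIV⟩ := h1
  set w : ∀ s, X s := fun s => if s ∈ hI.toFinset then u s else v s with hw
  have hwmem : w ∈ I.pi V := by
    intro t ht
    have : w t = u t := by simp [hw, hI.mem_toFinset.2 ht]
    rw [this]
    exact mem_of_mem_nhds (hV t)
  have h2 : |g w - g u| < |g u - g v| := hIV hwmem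
  have h3 : g w = g v := by
    refine eq_of_finset g E hE hI.toFinset w v ?_ ?_
    · intro t ht; simp [hw, ht]
    · intro t ht
      by_cases htE : t ∈ E
      · exact Or.inr (by simp [hw, ht, huv t htE])
      · exact Or.inl htE
  rw [h3, abs_sub_comm] at h2
  exact absurd h2 (lt_irrefl _)
end aux

open Filter Topology in
theorem stmt9 (c : Cardinal.{u}) (hc : Cardinal.aleph0 ≤ c)
    (S : Type u) (X : S → Type u) [∀ s, TopologicalSpace (X s)]
    (Y : Type u) [TopologicalSpace Y]
    (hX : PropIII c (∀ s, X s)) (hY : PropIII c Y)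
    (f : (∀ s, X s) × Y → ℝ)
    (hf1 : ∀ y, Continuous fun x : ∀ s, X s => f (x, y))
    (hf2 : ∀ x : ∀ s, X s, Continuous fun y : Y => f (x, y)) :
    ∃ T : Set S, #T ≤ c ∧
      ∀ (u v : ∀ s, X s) (y : Y),
        (∀ s ∈ T, u s = v s) → f (u, y) = f (v, y) := by
  classical
  set E : Y → Set S := fun y =>
    {s | ∃ u v : ∀ t, X t, (∀ t, t ≠ s → u t = v t) ∧ f (u, y) ≠ f (v, y)} with hE
  -- Step 1: each E y is small
  have hEle : ∀ y, #(E y) ≤ c := by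
    intro y
    set g : (∀ s, X s) → ℝ := fun x => f (x, y) with hgdef
    have hgc : Continuous g := hf1 y
    set U : ↥(E y) → Set (∀ s, X s) := fun i =>
      {x | g x ≠ g (Function.update x i.1 (i.2.choose_spec.choose i.1))} with hU
    refine hX _ U ?_ ?_ ?_
    · intro i
      have h1 : Continuous fun x : ∀ s, X s =>
          Function.update x i.1 (i.2.choose_spec.choose i.1) :=
        (continuous_update i.1).comp (continuous_id.prodMk continuous_const)
      exact isOpen_ne_fun hgc (hgc.comp h1)
    · intro i
      obtain ⟨hagree, hne⟩ := i.2.choose_spec.choose_spec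
      refine ⟨i.2.choose, ?_⟩
      have heq : Function.update i.2.choose i.1 (i.2.choose_spec.choose i.1)
          = i.2.choose_spec.choose := funext fun t => by
        by_cases ht : t = i.1
        · subst ht; simp
        · rw [Function.update_of_ne ht]; exact hagree t ht
      show g i.2.choose ≠ g _
      rw [heq]
      exact hne
    · intro x
      have hD := countable_diff g hgc x
      have hinj : #{i : ↥(E y) | x ∈ U i} ≤
          #{s : S | ∃ a : X s, g (Function.update x s a) ≠ g x} := by
        refine Cardinal.mk_le_of_injective
          (f := fun i => ⟨i.1.1, ⟨i.1.2.choose_spec.choose i.1.1, Ne.symm i.2⟩⟩) ?_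
        intro i j hij
        apply Subtype.ext; apply Subtype.ext
        simpa using congrArg Subtype.val hij

      refine hinj.trans (le_trans ?_ hc)
      haveI := hD.to_subtype
      exact Cardinal.mk_le_aleph0
  -- Step 2: the union is small
  set T : Set S := ⋃ y, E y with hT
  have hmemE : ∀ i : ↥T, i.1 ∈ E (Set.mem_iUnion.1 i.2).choose := fun i =>
    (Set.mem_iUnion.1 i.2).choose_spec
  have hTle : #T ≤ c := by
    set W : ↥T → Set Y := fun i =>
      {y' | f ((hmemE i).choose, y') ≠ f ((hmemE i).choose_spec.choose, y')} with hW
    refine hY _ W ?_ ?_ ?_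
    · intro i
      exact isOpen_ne_fun (hf2 _) (hf2 _)
    · intro i
      exact ⟨(Set.mem_iUnion.1 i.2).choose, (hmemE i).choose_spec.choose_spec.2⟩
    · intro y'
      have hinj : #{i : ↥T | y' ∈ W i} ≤ #(E y') := by
        refine Cardinal.mk_le_of_injective (f := fun i =>
          ⟨i.1.1, ⟨(hmemE i.1).choose, (hmemE i.1).choose_spec.choose,
            (hmemE i.1).choose_spec.choose_spec.1, i.2⟩⟩) ?_
        intro i j hij
        apply Subtype.ext; apply Subtype.ext
        simpa using congrArg Subtype.val hij

      exact hinj.trans (hEle y')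
  refine ⟨T, hTle, ?_⟩
  intro u v y huv
  have hEy : ∀ s ∉ E y, ∀ (z : ∀ t, X t) (a : X s),
      (fun x => f (x, y)) (Function.update z s a) = (fun x => f (x, y)) z := by
    intro s hs z a
    by_contra hne
    exact hs ⟨Function.update z s a, z, fun t ht => Function.update_of_ne ht a z, hne⟩
  exact eq_of_agree _ (hf1 y) (E y) hEy u v
    (fun s hs => huv s (Set.mem_iUnion.2 ⟨y, hs⟩))
end

section
/- Let X = ∏_{s∈S} X_s be a product of nonempty metrizable spaces each with density at most ℵ for an infinite cardinal ℵ. Then every continuous function f : X → ℝ depends on at most ℵ coordinates. -/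
universe u

open Cardinal

lemma my_pigeon {α β : Type u} {c : Cardinal.{u}} (hc : ℵ₀ ≤ c) (hβ : #β ≤ c)
    (g : α → β) (hα : c < #α) : ∃ b : β, c < #(g ⁻¹' {b}) := by
  by_contra h
  push_neg at h
  have e : (Set.univ : Set α) = ⋃ b, g ⁻¹' {b} := by ext x; simp
  have : #α ≤ c := by
    calc #α = #(Set.univ : Set α) := Cardinal.mk_univ.symm
    _ = #(⋃ b, g ⁻¹' {b} : Set α) := by rw [e]
    _ ≤ Cardinal.sum fun b : β => #(g ⁻¹' {b}) := Cardinal.mk_iUnion_le_sum_mk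
    _ ≤ Cardinal.sum fun _ : β => c := Cardinal.sum_le_sum _ _ h
    _ = #β * c := Cardinal.sum_const' _ _
    _ ≤ c * c := mul_le_mul_left hβ c
    _ = c := Cardinal.mul_eq_self hc
  exact absurd this (not_le.mpr hα)

lemma my_delta_aux {σ : Type u} {c : Cardinal.{u}} (hc : ℵ₀ ≤ c) :
    ∀ (n : ℕ) (I : Type u) (F : I → Finset σ), c < #I → (∀ i, (F i).card ≤ n) →
      ∃ (R : Finset σ) (J : Set I), c < #J ∧
        ∀ i ∈ J, ∀ j ∈ J, i ≠ j → ∀ x, x ∈ F i → x ∈ F j → x ∈ R := by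
  intro n
  induction n with
  | zero =>
    intro I F hI h0
    refine ⟨∅, Set.univ, by rwa [Cardinal.mk_univ], ?_⟩
    intro i _ j _ _ x hx _
    have : F i = ∅ := Finset.card_eq_zero.mp (Nat.le_zero.mp (h0 i))
    simp [this] at hx
  | succ n ih =>
    intro I F hI hcard
    classical
    by_cases hcase : ∃ t, c < #{i : I | t ∈ F i}
    · obtain ⟨t, ht⟩ := hcase
      obtain ⟨R', J', hJ', hp⟩ := ih {i : I | t ∈ F i} (fun i => (F i.1).erase t) ht
        (fun i => by
          show ((F i.1).erase t).card ≤ n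
          have := Finset.card_erase_of_mem i.2
          have := hcard i.1
          omega)
      refine ⟨insert t R', Subtype.val '' J', ?_, ?_⟩
      · rwa [Cardinal.mk_image_eq Subtype.val_injective]
      · rintro _ ⟨i, hi, rfl⟩ _ ⟨j, hj, rfl⟩ hne x hxi hxj
        by_cases hxt : x = t
        · simp [hxt]
        · refine Finset.mem_insert_of_mem (hp i hi j hj (fun h => hne (by rw [h])) x ?_ ?_) <;>
            { rw [Finset.mem_erase]; exact ⟨hxt, by assumption⟩ }
    · push_neg at hcase
      obtain ⟨M, hM⟩ := zorn_subset
        {M : Set I | ∀ i ∈ M, ∀ j ∈ M, i ≠ j → Disjoint (F i) (F j)} (by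
          intro ch hch hchain
          refine ⟨⋃₀ ch, ?_, fun s hs => Set.subset_sUnion_of_mem hs⟩
          rintro i ⟨s, hs, his⟩ j ⟨s', hs', hjs'⟩ hne
          rcases hchain.total hs hs' with h | h
          · exact hch hs' _ (h his) _ hjs' hne
          · exact hch hs _ his _ (h hjs') hne)
      by_cases hMc : c < #M
      · refine ⟨∅, M, hMc, fun i hi j hj hne x hxi hxj => ?_⟩
        exact absurd hxj (Finset.disjoint_left.mp (hM.1 i hi j hj hne) hxi)
      · push_neg at hMc
        exfalso
        set TT : Set σ := ⋃ i : M, ((F i.1 : Finset σ) : Set σ) with hTT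
        have hTTc : #TT ≤ c := by
          calc #TT ≤ Cardinal.sum fun i : M => #((F i.1 : Finset σ) : Set σ) :=
            Cardinal.mk_iUnion_le_sum_mk
          _ ≤ Cardinal.sum fun _ : M => c :=
            Cardinal.sum_le_sum _ _ (fun i => le_trans (Cardinal.mk_le_aleph0) hc)
          _ = #M * c := Cardinal.sum_const' _ _
          _ ≤ c * c := mul_le_mul_left hMc c
          _ = c := Cardinal.mul_eq_self hc
        have cover : (Set.univ : Set I) ⊆ M ∪ ⋃ t : TT, {j : I | (t : σ) ∈ F j} := by
          intro j _
          by_cases hjM : j ∈ M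
          · exact Or.inl hjM
          · right
            have hbad : insert j M ∉
                {M : Set I | ∀ i ∈ M, ∀ j ∈ M, i ≠ j → Disjoint (F i) (F j)} := by
              intro hmem
              exact hjM (hM.2 hmem (Set.subset_insert _ _) (Set.mem_insert _ _))
            simp only [Set.mem_setOf_eq, not_forall] at hbad
            obtain ⟨i₁, hi₁, i₂, hi₂, hne, hnd⟩ := hbad
            rcases Set.mem_insert_iff.mp hi₁ with rfl | hi₁M
            · rcases Set.mem_insert_iff.mp hi₂ with rfl | hi₂M
              · exact absurd rfl hne
              · obtain ⟨x, hx1, hx2⟩ := Finset.not_disjoint_iff.mp hnd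
                exact Set.mem_iUnion.mpr ⟨⟨x, Set.mem_iUnion.mpr ⟨⟨i₂, hi₂M⟩, hx2⟩⟩, hx1⟩
            · rcases Set.mem_insert_iff.mp hi₂ with rfl | hi₂M
              · obtain ⟨x, hx1, hx2⟩ := Finset.not_disjoint_iff.mp hnd
                exact Set.mem_iUnion.mpr ⟨⟨x, Set.mem_iUnion.mpr ⟨⟨i₁, hi₁M⟩, hx1⟩⟩, hx2⟩
              · exact absurd (hM.1 i₁ hi₁M i₂ hi₂M hne) hnd
        have : #I ≤ c := by
          calc #I = #(Set.univ : Set I) := Cardinal.mk_univ.symm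
          _ ≤ #((M ∪ ⋃ t : TT, {j : I | (t : σ) ∈ F j} : Set I)) :=
            Cardinal.mk_le_mk_of_subset cover
          _ ≤ #M + #(⋃ t : TT, {j : I | (t : σ) ∈ F j} : Set I) := Cardinal.mk_union_le _ _
          _ ≤ c + c := by
            refine add_le_add hMc ?_
            calc #(⋃ t : TT, {j : I | (t : σ) ∈ F j} : Set I)
                ≤ Cardinal.sum fun t : TT => #{j : I | (t : σ) ∈ F j} :=
              Cardinal.mk_iUnion_le_sum_mk
            _ ≤ Cardinal.sum fun _ : TT => c := Cardinal.sum_le_sum _ _ (fun t => hcase t)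
            _ = #TT * c := Cardinal.sum_const' _ _
            _ ≤ c * c := mul_le_mul_left hTTc c
            _ = c := Cardinal.mul_eq_self hc
          _ = c := Cardinal.add_eq_self hc
        exact absurd this (not_le.mpr hI)

lemma my_delta {σ : Type u} {I : Type u} {c : Cardinal.{u}} (hc : ℵ₀ ≤ c)
    (hI : c < #I) (F : I → Finset σ) :
    ∃ (R : Finset σ) (J : Set I), c < #J ∧
      ∀ i ∈ J, ∀ j ∈ J, i ≠ j → ∀ x, x ∈ F i → x ∈ F j → x ∈ R := by
  obtain ⟨b, hb⟩ := my_pigeon hc (le_trans Cardinal.mk_le_aleph0 hc)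
    (fun i => (ULift.up (F i).card : ULift.{u} ℕ)) hI
  set L := (fun i => (ULift.up (F i).card : ULift.{u} ℕ)) ⁻¹' {b} with hL
  obtain ⟨R, J, hJ, hp⟩ := my_delta_aux hc b.down L (fun i => F i.1) hb
    (fun i => le_of_eq (congrArg ULift.down i.2))
  refine ⟨R, Subtype.val '' J, by rwa [Cardinal.mk_image_eq Subtype.val_injective], ?_⟩
  rintro _ ⟨i, hi, rfl⟩ _ ⟨j, hj, rfl⟩ hne x hxi hxj
  exact hp i hi j hj (fun h => hne (by rw [h])) x hxi hxj


lemma my_partA {S : Type u} [DecidableEq S] {X : S → Type u} [∀ s, TopologicalSpace (X s)]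
    (a : ∀ s, X s) (f : (∀ s, X s) → ℝ) (hf : Continuous f)
    (u v : ∀ s, X s) (huv : ∀ s ∈ {s | ∃ w x, f (Function.update w s x) ≠ f w}, u s = v s) :
    f u = f v := by
  classical
  set Tstar : Set S := {s | ∃ w x, f (Function.update w s x) ≠ f w} with hTdef
  set r : (∀ s, X s) → (∀ s, X s) := fun u s => if s ∈ Tstar then u s else a s with hrdef
  have hr : Continuous r := by
    refine continuous_pi fun s => ?_
    by_cases h : s ∈ Tstar
    · simpa only [hrdef, if_pos h] using continuous_apply s
    · simpa only [hrdef, if_neg h] using continuous_const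
  have hkey : ∀ (n : ℕ) (E : Finset S) (w : ∀ s, X s), E.card ≤ n →
      (∀ s, s ∉ Tstar → w s ≠ a s → s ∈ E) → f w = f (r w) := by
    intro n
    induction n with
    | zero =>
      intro E w hE hsupp
      have : r w = w := by
        funext s
        by_cases h : s ∈ Tstar
        · simp only [hrdef, if_pos h]
        · by_cases h2 : w s = a s
          · simp only [hrdef, if_neg h, h2]
          · have := hsupp s h h2
            simp [Finset.card_eq_zero.mp (Nat.le_zero.mp hE)] at this
      rw [this]
    | succ n ih =>
      intro E w hE hsupp
      by_cases hex : ∃ t, t ∉ Tstar ∧ w t ≠ a t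
      · obtain ⟨t, htT, hta⟩ := hex
        have htE : t ∈ E := hsupp t htT hta
        have hteq : ∀ w' x, f (Function.update w' t x) = f w' := by
          have h := htT
          simp only [hTdef, Set.mem_setOf_eq, not_exists, not_not] at h
          exact h
        have h1 : f (Function.update w t (a t)) = f w := hteq w (a t)
        have h2 : r (Function.update w t (a t)) = r w := by
          funext s
          by_cases h : s ∈ Tstar
          · have hst : s ≠ t := fun e => htT (e ▸ h)
            simp only [hrdef, if_pos h, Function.update_of_ne hst]
          · simp only [hrdef, if_neg h]
        have h3 : f (Function.update w t (a t)) = f (r (Function.update w t (a t))) := by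
          refine ih (E.erase t) _ ?_ ?_
          · have := Finset.card_erase_of_mem htE
            omega
          · intro s hs hne
            rcases eq_or_ne s t with rfl | hst
            · simp [Function.update_self] at hne
            · exact Finset.mem_erase.mpr
                ⟨hst, hsupp s hs (by rwa [Function.update_of_ne hst] at hne)⟩
        rw [← h1, h3, h2]
      · push_neg at hex
        have : r w = w := by
          funext s
          by_cases h : s ∈ Tstar
          · simp only [hrdef, if_pos h]
          · simp only [hrdef, if_neg h, (hex s h).symm]
        rw [this]
  have hdense : Dense {w : ∀ s, X s | {s | w s ≠ a s}.Finite} := by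
    rw [dense_iff_inter_open]
    rintro U hU ⟨w, hw⟩
    obtain ⟨I, V, hV, hsub⟩ := isOpen_pi_iff.mp hU w hw
    refine ⟨fun s => if s ∈ I then w s else a s, hsub ?_, ?_⟩
    · intro t ht
      simp only [Finset.mem_coe] at ht
      simp only [ht, if_true]
      exact (hV t ht).2
    · refine Set.Finite.subset I.finite_toSet fun s hs => ?_
      simp only [Set.mem_setOf_eq] at hs
      by_contra hsI
      simp only [Finset.mem_coe] at hsI
      exact hs (by simp [if_neg hsI])
  have hall : ∀ w, f w = f (r w) := by
    have hcl : IsClosed {w | f w = f (r w)} := isClosed_eq hf (hf.comp hr)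
    have hsub : {w : ∀ s, X s | {s | w s ≠ a s}.Finite} ⊆ {w | f w = f (r w)} := by
      intro w hfin
      exact hkey (hfin.toFinset.card) hfin.toFinset w le_rfl
        (fun s _ hne => hfin.mem_toFinset.mpr hne)
    intro w
    have : (Set.univ : Set (∀ s, X s)) ⊆ {w | f w = f (r w)} := by
      rw [← hdense.closure_eq]
      exact hcl.closure_subset_iff.mpr hsub
    exact this (Set.mem_univ w)
  have hruv : r u = r v := by
    funext s
    by_cases h : s ∈ Tstar
    · simp only [hrdef, if_pos h, huv s h]
    · simp only [hrdef, if_neg h]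
  rw [hall u, hall v, hruv]



lemma my_partB {S : Type u} [DecidableEq S] {X : S → Type u} [∀ s, TopologicalSpace (X s)]
    [∀ s, Nonempty (X s)] {c : Cardinal.{u}} (hc : ℵ₀ ≤ c)
    (D : ∀ s, Set (X s)) (hDd : ∀ s, Dense (D s)) (hDc : ∀ s, #(D s) ≤ c)
    (f : (∀ s, X s) → ℝ) (hf : Continuous f) :
    #{s : S | ∃ w x, f (Function.update w s x) ≠ f w} ≤ c := by
  classical
  set Tstar : Set S := {s : S | ∃ w x, f (Function.update w s x) ≠ f w} with hTdef
  by_contra hlt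
  rw [not_le] at hlt
  -- Step 1: witnesses with a fixed direction
  have hwit : ∀ s : Tstar, ∃ w x, f (Function.update w (s : S) x) < f w := by
    rintro ⟨s, w, x, hne⟩
    rcases lt_or_gt_of_ne hne with h | h
    · exact ⟨w, x, h⟩
    · refine ⟨Function.update w s x, w s, ?_⟩
      rwa [Function.update_idem, Function.update_eq_self]
  choose w0 x0 hwx using hwit
  -- Step 2: rationals
  have hrat : ∀ s : Tstar, ∃ pq : ℚ × ℚ, ((pq.1 : ℝ) < (pq.2 : ℝ)) ∧
      f (Function.update (w0 s) (s : S) (x0 s)) < (pq.1 : ℝ) ∧ ((pq.2 : ℝ)) < f (w0 s) := by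
    intro s
    obtain ⟨p, hp1, hp2⟩ := exists_rat_btwn (hwx s)
    obtain ⟨q, hq1, hq2⟩ := exists_rat_btwn hp2
    exact ⟨(p, q), hq1, hp1, hq2⟩
  choose pq hpq1 hpq2 hpq3 using hrat
  -- Step 3: pigeonhole on the rational pair
  obtain ⟨b, hb⟩ := my_pigeon hc (le_trans Cardinal.mk_le_aleph0 hc)
    (fun s : Tstar => (ULift.up (pq s) : ULift.{u} (ℚ × ℚ))) hlt
  set ι := ((fun s : Tstar => (ULift.up (pq s) : ULift.{u} (ℚ × ℚ))) ⁻¹' {b}) with hιdef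
  set p : ℚ := b.down.1 with hpdef
  set q : ℚ := b.down.2 with hqdef
  have hfib : ∀ i : ι, pq i.1 = (p, q) := by
    intro i
    have : ULift.up (pq i.1) = b := i.2
    rw [hpdef, hqdef, ← this]
  have hpq : (p : ℝ) < (q : ℝ) := by
    have hne : Nonempty ι := by
      rw [← Cardinal.mk_ne_zero_iff]
      exact ne_of_gt (lt_of_lt_of_le (lt_of_lt_of_le Cardinal.aleph0_pos hc) (le_of_lt hb))
    obtain ⟨i⟩ := hne
    have := hpq1 i.1
    rwa [hfib i] at this
  set ww : ι → (∀ s, X s) := fun i => w0 i.1 with hwwdef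
  set ss : ι → S := fun i => (i.1 : S) with hssdef
  set uu : ι → (∀ s, X s) := fun i => Function.update (w0 i.1) (i.1 : S) (x0 i.1) with huudef
  have hssinj : Function.Injective ss := by
    intro i j h
    exact Subtype.ext (Subtype.ext h)
  have wB : ∀ i : ι, (q : ℝ) < f (ww i) := by
    intro i; have := hpq3 i.1; rwa [hfib i] at this
  have uA : ∀ i : ι, f (uu i) < (p : ℝ) := by
    intro i; have := hpq2 i.1; rwa [hfib i] at this
  -- Step 4: basic open boxes
  have hbox : ∀ i : ι, ∃ (G : Finset S) (W V : ∀ t, Set (X t)),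
      (∀ t, IsOpen (W t)) ∧ (∀ t, IsOpen (V t)) ∧
      (∀ t, ww i t ∈ W t) ∧ (∀ t, uu i t ∈ V t) ∧
      (∀ z, (∀ t ∈ G, z t ∈ W t) → (q : ℝ) < f z) ∧
      (∀ z, (∀ t ∈ G, z t ∈ V t) → f z < (p : ℝ)) := by
    intro i
    have h1 : ww i ∈ f ⁻¹' (Set.Ioi (q : ℝ)) := wB i
    have h2 : uu i ∈ f ⁻¹' (Set.Iio (p : ℝ)) := uA i
    obtain ⟨I₁, U₁, hU₁, hsub₁⟩ :=
      isOpen_pi_iff.mp (hf.isOpen_preimage _ isOpen_Ioi) _ h1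
    obtain ⟨I₂, U₂, hU₂, hsub₂⟩ :=
      isOpen_pi_iff.mp (hf.isOpen_preimage _ isOpen_Iio) _ h2
    refine ⟨I₁ ∪ I₂, fun t => if t ∈ I₁ then U₁ t else Set.univ,
      fun t => if t ∈ I₂ then U₂ t else Set.univ, ?_, ?_, ?_, ?_, ?_, ?_⟩
    · intro t; dsimp only; split_ifs with h
      · exact (hU₁ t h).1
      · exact isOpen_univ
    · intro t; dsimp only; split_ifs with h
      · exact (hU₂ t h).1
      · exact isOpen_univ
    · intro t; dsimp only; split_ifs with h
      · exact (hU₁ t h).2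
      · trivial
    · intro t; dsimp only; split_ifs with h
      · exact (hU₂ t h).2
      · trivial
    · intro z hz
      have : z ∈ Set.pi (↑I₁) U₁ := by
        intro t ht
        have ht' : t ∈ I₁ := ht
        have := hz t (Finset.mem_union_left _ ht')
        dsimp only at this
        rwa [if_pos ht'] at this
      exact hsub₁ this
    · intro z hz
      have : z ∈ Set.pi (↑I₂) U₂ := by
        intro t ht
        have ht' : t ∈ I₂ := ht
        have := hz t (Finset.mem_union_right _ ht')
        dsimp only at this
        rwa [if_pos ht'] at this
      exact hsub₂ this
  choose G W V hWo hVo hWmem hVmem hWB hVA using hbox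
  -- Step 5: delta system
  obtain ⟨R, J, hJ, hroot⟩ := my_delta hc hb G
  -- Step 6: discard indices whose coordinate lies in the root
  set J' : Set ι := {i : ι | i ∈ J ∧ ss i ∉ R} with hJ'def
  have hJ'c : c < #J' := by
    by_contra hle
    rw [not_lt] at hle
    have hKle : #{i : ι | ss i ∈ R} ≤ c := by
      have : #{i : ι | ss i ∈ R} ≤ #(R : Finset S) := by
        refine Cardinal.mk_le_of_injective (f := fun i => (⟨ss i.1, i.2⟩ : {x // x ∈ R})) ?_
        intro i j h
        have h' : ss i.1 = ss j.1 := by simpa using Subtype.ext_iff.mp h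
        exact Subtype.ext (hssinj h')
      refine le_trans this (le_trans ?_ hc)
      rw [Cardinal.mk_coe_finset]
      exact le_of_lt (Cardinal.nat_lt_aleph0 _)
    have hcover : J ⊆ J' ∪ {i : ι | ss i ∈ R} := by
      intro i hi
      by_cases h : ss i ∈ R
      · exact Or.inr h
      · exact Or.inl ⟨hi, h⟩
    have : #J ≤ c := by
      calc #J ≤ #((J' ∪ {i : ι | ss i ∈ R} : Set ι)) := Cardinal.mk_le_mk_of_subset hcover
      _ ≤ #J' + #{i : ι | ss i ∈ R} := Cardinal.mk_union_le _ _
      _ ≤ c + c := add_le_add hle hKle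
      _ = c := Cardinal.add_eq_self hc
    exact absurd this (not_le.mpr hJ)
  -- Step 7: dense points
  have hpick : ∀ (i : ι) (t : S), ∃ y : X t, y ∈ D t ∧ (t ≠ ss i → y ∈ W i t ∩ V i t) := by
    intro i t
    by_cases h : t = ss i
    · obtain ⟨y, hy⟩ := (hDd t).nonempty
      exact ⟨y, hy, fun hne => absurd h hne⟩
    · have hmem : ww i t ∈ W i t ∩ V i t := by
        refine ⟨hWmem i t, ?_⟩
        have := hVmem i t
        simp only [huudef] at this
        rwa [Function.update_of_ne h] at this
      obtain ⟨y, hyD, hyWV⟩ := (hDd t).exists_mem_open ((hWo i t).inter (hVo i t))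
        ⟨ww i t, hmem⟩
      exact ⟨y, hyD, fun _ => hyWV⟩
  choose d hdD hdWV using hpick
  -- Step 8: injection into the small product
  have hinj : Function.Injective
      (fun i : J' => (fun t : {x // x ∈ R} => (⟨d i.1 t.1, hdD i.1 t.1⟩ : D t.1))) := by
    intro i j hij
    by_contra hne'
    have hne : i.1 ≠ j.1 := fun h => hne' (Subtype.ext h)
    have hdeq : ∀ t ∈ R, d i.1 t = d j.1 t := by
      intro t ht
      have := congrFun hij ⟨t, ht⟩
      exact Subtype.ext_iff.mp this
    set z : ∀ t, X t := fun t =>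
      if t ∈ R then d i.1 t else
      if t ∈ G i.1 then ww i.1 t else
      if t ∈ G j.1 then uu j.1 t else Classical.arbitrary _ with hzdef
    have hqz : (q : ℝ) < f z := by
      refine hWB i.1 z ?_
      intro t ht
      by_cases htR : t ∈ R
      · have : z t = d i.1 t := by rw [hzdef]; simp [htR]
        rw [this]
        exact (hdWV i.1 t (fun h => i.2.2 (h ▸ htR))).1
      · have : z t = ww i.1 t := by rw [hzdef]; simp [htR, ht]
        rw [this]
        exact hWmem i.1 t
    have hpz : f z < (p : ℝ) := by
      refine hVA j.1 z ?_
      intro t ht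
      by_cases htR : t ∈ R
      · have : z t = d i.1 t := by rw [hzdef]; simp [htR]
        rw [this, hdeq t htR]
        exact (hdWV j.1 t (fun h => j.2.2 (h ▸ htR))).2
      · have htGi : t ∉ G i.1 := fun hGi =>
          htR (hroot i.1 i.2.1 j.1 j.2.1 hne t hGi ht)
        have : z t = uu j.1 t := by rw [hzdef]; simp [htR, htGi, ht]
        rw [this]
        exact hVmem j.1 t
    linarith
  have : #J' ≤ c := by
    calc #J' ≤ #(∀ t : {x // x ∈ R}, D t.1) := Cardinal.mk_le_of_injective hinj
    _ = Cardinal.prod (fun t : {x // x ∈ R} => #(D t.1)) := Cardinal.mk_pi _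
    _ ≤ Cardinal.prod (fun _ : {x // x ∈ R} => c) := Cardinal.prod_le_prod _ _ (fun t => hDc t.1)
    _ = c ^ #{x // x ∈ R} := Cardinal.prod_const' _ _
    _ = c ^ ((R.card : ℕ) : Cardinal) := by rw [Cardinal.mk_coe_finset]
    _ = c ^ (R.card : ℕ) := Cardinal.power_natCast _ _
    _ ≤ c := Cardinal.power_nat_le hc
  exact absurd this (not_le.mpr hJ'c)

theorem stmt10 (c : Cardinal.{u}) (hc : Cardinal.aleph0 ≤ c)
    (S : Type u) (X : S → Type u) [∀ s, TopologicalSpace (X s)]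
    [∀ s, TopologicalSpace.MetrizableSpace (X s)] [∀ s, Nonempty (X s)]
    (hd : ∀ s, ∃ D : Set (X s), Dense D ∧ #D ≤ c)
    (f : (∀ s, X s) → ℝ) (hf : Continuous f) :
    ∃ T : Set S, #T ≤ c ∧
      ∀ u v : ∀ s, X s, (∀ s ∈ T, u s = v s) → f u = f v := by
  classical
  choose D hDd hDc using hd
  refine ⟨{s : S | ∃ w x, f (Function.update w s x) ≠ f w}, ?_, ?_⟩
  · exact my_partB hc D hDd hDc f hf
  · intro u v huv
    exact my_partA (fun s => Classical.arbitrary (X s)) f hf u v huv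
end

section
/- Let ℵ be an infinite cardinal, let X_i = ∏_{s∈S_i} X_{i,s} (i = 1,…,n) be products of metrizable spaces, each X_{i,s} containing at least two points, and suppose |S₁| > ℵ. If every separately continuous function f : X₁ × ⋯ × Xₙ → ℝ depends on at most ℵ coordinates with respect to the first variable, then d(X_{i,s}) ≤ ℵ for every i and s. -/
universe u

open Cardinal

/-!
If a factor `X i₀ s₀` had density `> ℵ`, it would contain an `ε`-separated set `A` with
`|A| = ℵ⁺`, hence bumps `φ_a` (`a ∈ A`) with pairwise far apart, locally finite supports.
Embed `A` into `S₁` by `a ↦ s_a` and pick a nonconstant `ψ_s` on each `X_{1,s}`. Then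
`x ↦ ∑_a ψ_{s_a}(x_{1,s_a}) φ_a(x_{i₀,s₀})` is even jointly continuous, but at a point with
`x_{i₀,s₀} = a` its value changes with the coordinate `s_a` of the first variable alone, unless
`(1, s_a) = (i₀, s₀)`. So it depends on at least `ℵ⁺` coordinates in the first variable.
-/

open Set Function Metric
open scoped NNReal ENNReal

lemma Cardinal.mk_le_of_subsingleton_compl {α : Type u} {c : Cardinal.{u}} (hc : ℵ₀ ≤ c)
    {s : Set α} (hs : #s ≤ c) (h : sᶜ.Subsingleton) : #α ≤ c := by
  rw [← mk_sum_compl s, ← add_one_eq hc]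
  exact add_le_add hs (mk_le_one_iff_set_subsingleton.2 h)

namespace Metric

lemma exists_maximal_isSeparated {X : Type*} [PseudoEMetricSpace X] (ε : ℝ≥0∞) (s : Set X) :
    ∃ N, Maximal (fun N ↦ N ⊆ s ∧ IsSeparated ε N) N := by
  refine zorn_subset _ fun C hCs hC ↦ ⟨⋃₀ C, ⟨sUnion_subset fun N hN ↦ (hCs hN).1, ?_⟩,
    fun _ ↦ subset_sUnion_of_mem⟩
  exact hC.pairwise_sUnion.2 fun N hN ↦ (hCs hN).2

lemma exists_dense_mk_le_of_forall_isSeparated {Y : Type u} [PseudoMetricSpace Y]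
    {c : Cardinal.{u}} (hc : ℵ₀ ≤ c)
    (h : ∀ ε : ℝ≥0, 0 < ε → ∀ A : Set Y, IsSeparated ε A → #A ≤ c) :
    ∃ D : Set Y, Dense D ∧ #D ≤ c := by
  have hnet (k : ℕ) : ∃ N : Set Y, IsSeparated ((k + 1 : ℝ≥0)⁻¹ : ℝ≥0) N ∧
      Set.univ ⊆ ⋃ z ∈ N, closedBall z (k + 1 : ℝ≥0)⁻¹ := by
    obtain ⟨N, hN⟩ := exists_maximal_isSeparated ((k + 1 : ℝ≥0)⁻¹ : ℝ≥0) (Set.univ : Set Y)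
    exact ⟨N, hN.prop.2, isCover_iff_subset_iUnion_closedBall.1 (.of_maximal_isSeparated hN)⟩
  choose N hNsep hNcover using hnet
  refine ⟨⋃ k, N k, Metric.dense_iff.2 fun y r hr ↦ ?_, ?_⟩
  · obtain ⟨k, hk⟩ := exists_nat_one_div_lt hr
    obtain ⟨z, hz, hyz⟩ := mem_iUnion₂.1 (hNcover k (mem_univ y))
    refine ⟨z, mem_ball'.2 (lt_of_le_of_lt ?_ hk), mem_iUnion_of_mem k hz⟩
    simpa using hyz
  · have hN (k : ℕ) : #(N k) ≤ c := h _ (by positivity) _ (hNsep k)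
    have := mk_iUnion_le_lift.{u, 0} N
    rw [lift_uzero, mk_nat, lift_aleph0] at this
    calc #(⋃ k, N k) ≤ ℵ₀ * ⨆ k, lift.{0} #(N k) := this
      _ ≤ c * c := by gcongr; exact ciSup_le' fun k ↦ by simpa using hN k
      _ = c := mul_eq_self hc

variable {Y : Type*} [PseudoMetricSpace Y]

lemma exists_continuous_eq_one_support_subset_ball (y : Y) {r : ℝ} (hr : 0 < r) :
    ∃ φ : Y → ℝ, Continuous φ ∧ φ y = 1 ∧ support φ ⊆ ball y r := by
  refine ⟨fun z ↦ max 0 (1 - dist z y / r), by fun_prop, by simp, fun z hz ↦ ?_⟩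
  rw [mem_support, ne_eq, max_eq_left_iff, not_le, sub_pos, div_lt_one hr] at hz
  exact hz

lemma IsSeparated.lt_dist {ε : ℝ≥0} {A : Set Y} (hA : IsSeparated ε A) {a b : Y} (ha : a ∈ A)
    (hb : b ∈ A) (hab : a ≠ b) : (ε : ℝ) < dist a b := by
  have : (ε : ℝ≥0∞) < edist a b := hA ha hb hab
  rwa [edist_nndist, ENNReal.coe_lt_coe, ← NNReal.coe_lt_coe, coe_nndist] at this

lemma IsSeparated.locallyFinite_ball {ε : ℝ≥0} (hε : 0 < ε) {A : Set Y}
    (hA : IsSeparated ε A) : LocallyFinite fun a : A ↦ ball (a : Y) (ε / 4) := by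
  refine fun y ↦ ⟨ball y (ε / 4), ball_mem_nhds y (by positivity), Set.Subsingleton.finite ?_⟩
  rintro a ⟨z, hza, hzy⟩ b ⟨w, hwb, hwy⟩
  by_contra hab
  have := hA.lt_dist a.2 b.2 (Subtype.coe_injective.ne hab)
  rw [mem_ball] at hza hzy hwb hwy
  linarith [dist_triangle4 (a : Y) z w b, dist_triangle z y w, dist_comm (a : Y) z, dist_comm y w]

lemma IsSeparated.exists_bump_family {ε : ℝ≥0} (hε : 0 < ε) {A : Set Y}
    (hA : IsSeparated ε A) :
    ∃ φ : A → Y → ℝ, (∀ a, Continuous (φ a)) ∧ LocallyFinite (fun a ↦ support (φ a)) ∧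
      (∀ a, φ a a = 1) ∧ Pairwise fun a b ↦ φ a b = 0 := by
  choose φ hφc hφ1 hφsupp using
    fun a : A ↦ exists_continuous_eq_one_support_subset_ball (a : Y) (r := ε / 4) (by positivity)
  refine ⟨φ, hφc, (hA.locallyFinite_ball hε).subset hφsupp, hφ1, fun a b hab ↦ ?_⟩
  refine notMem_support.1 fun hb ↦ ?_
  have := hA.lt_dist a.2 b.2 (Subtype.coe_injective.ne hab)
  have := mem_ball'.1 (hφsupp a hb)
  linarith [ε.2]

end Metric

section Product

variable {ι : Type*} [DecidableEq ι] {S : ι → Type*} {X : ∀ i, S i → Type*}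

def DependsOnlyOn {β : Type*} (f : (∀ i s, X i s) → β) (j : ι) (T : Set (S j)) : Prop :=
  ∀ (x : ∀ i s, X i s) (u : ∀ s, X j s), (∀ s ∈ T, u s = x j s) → f (update x j u) = f x

variable [∀ i s, TopologicalSpace (X i s)] [∀ i s, Nonempty (X i s)]

theorem exists_continuous_forall_dependsOnlyOn_compl_preimage_subsingleton
    (j i₀ : ι) (s₀ : S i₀)
    {I : Type*} (e : I ↪ S j) (y : I → X i₀ s₀) (φ : I → X i₀ s₀ → ℝ)
    (hφc : ∀ α, Continuous (φ α)) (hφfin : LocallyFinite fun α ↦ support (φ α))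
    (hφ_self : ∀ α, φ α (y α) = 1) (hφ_ne : Pairwise fun α β ↦ φ α (y β) = 0)
    (hψ : ∀ s, ∃ ψ : X j s → ℝ, Continuous ψ ∧ ∃ a b, ψ a ≠ ψ b) :
    ∃ f : (∀ i s, X i s) → ℝ, Continuous f ∧
      ∀ T, DependsOnlyOn f j T → (e ⁻¹' T)ᶜ.Subsingleton := by
  classical
  choose ψ hψc a b hab using hψ
  let f : (∀ i s, X i s) → ℝ := fun x ↦ ∑ᶠ α, ψ (e α) (x j (e α)) * φ α (x i₀ s₀)
  have hcoord : Continuous fun x : ∀ i s, X i s ↦ x i₀ s₀ := by fun_prop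
  have hf_cont : Continuous f := by
    refine continuous_finsum (fun α ↦ by fun_prop) ?_
    exact (hφfin.preimage_continuous hcoord).subset fun α ↦ support_mul_subset_right _ _
  have hf_eq (x : ∀ i s, X i s) (α : I) (hx : x i₀ s₀ = y α) : f x = ψ (e α) (x j (e α)) := by
    change ∑ᶠ β, ψ (e β) (x j (e β)) * φ β (x i₀ s₀) = _
    rw [finsum_eq_single _ α fun β hβ ↦ by simp only [hx, hφ_ne hβ, mul_zero], hx, hφ_self, mul_one]
  have hT (T : Set (S j)) (hfT : DependsOnlyOn f j T) (α : I) (hα : e α ∉ T) :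
      (⟨i₀, s₀⟩ : Σ i, S i) = ⟨j, e α⟩ := by
    by_contra hne
    -- points are built on `Σ i, S i`, where a single `update` changes a single coordinate
    let G : (p : Σ i, S i) → X p.1 p.2 :=
      update (update (fun _ ↦ Classical.arbitrary _) ⟨i₀, s₀⟩ (y α)) ⟨j, e α⟩ (b (e α))
    have key := hfT (Sigma.curry G) (update (Sigma.curry G j) (e α) (a (e α)))
      fun s hs ↦ update_of_ne (ne_of_mem_of_not_mem hs hα) _ _
    rw [← Sigma.curry_update ⟨j, e α⟩ G (a (e α)), hf_eq _ α, hf_eq _ α] at key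
    · exact hab _ (by simpa [Sigma.curry, G] using key)
    · simp [Sigma.curry, G, update_of_ne hne]
    · simp [Sigma.curry, G, update_of_ne hne]
  refine ⟨f, hf_cont, fun T hfT α hα β hβ ↦ e.injective ?_⟩
  exact sigma_mk_injective ((hT T hfT α hα).symm.trans (hT T hfT β hβ))

end Product

theorem stmt11 (c : Cardinal.{u}) (hc : Cardinal.aleph0 ≤ c)
    (n : ℕ) (hn : 0 < n) (S : Fin n → Type u) (X : ∀ i, S i → Type u)
    [∀ i s, TopologicalSpace (X i s)]
    [∀ i s, TopologicalSpace.MetrizableSpace (X i s)]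
    [∀ i s, Nontrivial (X i s)]
    (hS : c < #(S ⟨0, hn⟩))
    (hdep : ∀ f : (∀ i, ∀ s, X i s) → ℝ,
      (∀ (i : Fin n) (x : ∀ j, ∀ s, X j s),
        Continuous fun xi : ∀ s, X i s => f (Function.update x i xi)) →
      ∃ T : Set (S ⟨0, hn⟩), #T ≤ c ∧
        ∀ (x : ∀ i, ∀ s, X i s) (u : ∀ s, X ⟨0, hn⟩ s),
          (∀ s ∈ T, u s = x ⟨0, hn⟩ s) →
          f (Function.update x ⟨0, hn⟩ u) = f x) :
    ∀ i s, ∃ D : Set (X i s), Dense D ∧ #D ≤ c := by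
  intro i₀ s₀
  let _ (i : Fin n) (s : S i) : MetricSpace (X i s) := TopologicalSpace.metrizableSpaceMetric _
  refine exists_dense_mk_le_of_forall_isSeparated hc fun ε hε A hA ↦ ?_
  by_contra! hcA
  obtain ⟨A', hA'A, hA'⟩ := le_mk_iff_exists_subset.1 (Order.succ_le_of_lt hcA)
  obtain ⟨e⟩ : Nonempty (A' ↪ S ⟨0, hn⟩) := (le_def _ _).1 (hA' ▸ Order.succ_le_of_lt hS)
  obtain ⟨φ, hφc, hφfin, hφ_self, hφ_ne⟩ := (hA.subset hA'A).exists_bump_family hε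
  have hψ (s : S ⟨0, hn⟩) : ∃ ψ : X ⟨0, hn⟩ s → ℝ, Continuous ψ ∧ ∃ a b, ψ a ≠ ψ b := by
    obtain ⟨a, b, hab⟩ := exists_pair_ne (X ⟨0, hn⟩ s)
    exact ⟨(dist · a), by fun_prop, a, b, by simpa using hab.symm⟩
  obtain ⟨f, hfc, hf⟩ := exists_continuous_forall_dependsOnlyOn_compl_preimage_subsingleton
    ⟨0, hn⟩ i₀ s₀ e Subtype.val φ hφc hφfin hφ_self hφ_ne hψ
  obtain ⟨T, hT, hfT⟩ := hdep f fun i x ↦ hfc.comp (continuous_const.update i continuous_id)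
  have := mk_le_of_subsingleton_compl hc ((mk_preimage_of_injective _ _ e.injective).trans hT)
    (hf T hfT)
  exact (Order.lt_succ c).not_ge (hA' ▸ this)
end

section
/- Let ℵ be an infinite cardinal. A topological product X = ∏_{s∈S} X_s of nonempty spaces has property (I_ℵ) if and only if the finite subproduct ∏_{s∈T} X_s has property (I_ℵ) for every finite subset T ⊆ S. -/
universe u

open Cardinal

open Set


lemma delta_aux (c : Cardinal.{u}) (hc : ℵ₀ ≤ c) {J S : Type u} :
    ∀ (n : ℕ) (T : J → Finset S) (A : Set J), ¬ #A ≤ c → (∀ j ∈ A, (T j).card ≤ n) →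
    ∃ (R : Finset S) (B : Set J), B ⊆ A ∧ ¬ #B ≤ c ∧
      ∀ j ∈ B, ∀ k ∈ B, j ≠ k → ∀ s ∈ T j, s ∈ T k → s ∈ R := by
  classical
  intro n
  induction n with
  | zero =>
    intro T A hA hcard
    refine ⟨∅, A, subset_rfl, hA, fun j hj k _ _ s hs _ => ?_⟩
    have : T j = ∅ := Finset.card_eq_zero.mp (Nat.le_zero.mp (hcard j hj))
    simp [this] at hs
  | succ n ih =>
    intro T A hA hcard
    by_cases hex : ∃ a : S, ¬ #{j ∈ A | a ∈ T j} ≤ c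
    · obtain ⟨a, ha⟩ := hex
      obtain ⟨R', B, hBsub, hB, hR'⟩ := ih (fun j => (T j).erase a) {j ∈ A | a ∈ T j} ha
        (by
          intro j hj
          have h1 : (T j).card ≤ n + 1 := hcard j hj.1
          have h2 : ((T j).erase a).card = (T j).card - 1 := Finset.card_erase_of_mem hj.2
          have h3 : 1 ≤ (T j).card := Finset.card_pos.mpr ⟨a, hj.2⟩
          show ((T j).erase a).card ≤ n
          omega)
      refine ⟨insert a R', B, fun j hj => (hBsub hj).1, hB, fun j hj k hk hjk s hsj hsk => ?_⟩
      by_cases hsa : s = a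
      · subst hsa; exact Finset.mem_insert_self s R'
      · exact Finset.mem_insert_of_mem
          (hR' j hj k hk hjk s (Finset.mem_erase.mpr ⟨hsa, hsj⟩) (Finset.mem_erase.mpr ⟨hsa, hsk⟩))
    · push_neg at hex
      -- Zorn: maximal pairwise-disjoint subfamily
      obtain ⟨M, hM⟩ := zorn_subset
          {M : Set J | M ⊆ A ∧ ∀ j ∈ M, ∀ k ∈ M, j ≠ k → Disjoint (T j) (T k)}
        (by
          intro ch hch hchain
          refine ⟨⋃₀ ch, ⟨?_, ?_⟩, fun s hs => subset_sUnion_of_mem hs⟩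
          · exact sUnion_subset fun m hm => (hch hm).1
          · rintro j ⟨m1, hm1, hjm1⟩ k ⟨m2, hm2, hkm2⟩ hjk
            rcases hchain.total hm1 hm2 with h | h
            · exact (hch hm2).2 j (h hjm1) k hkm2 hjk
            · exact (hch hm1).2 j hjm1 k (h hkm2) hjk)
      obtain ⟨⟨hMA, hMdisj⟩, hMmax⟩ := hM
      by_cases hMc : ¬ #M ≤ c
      · exact ⟨∅, M, hMA, hMc, fun j hj k hk hjk s hsj hsk =>
          absurd (Finset.mem_inter.mpr ⟨hsj, hsk⟩)
            (by simpa [Finset.disjoint_iff_inter_eq_empty.mp (hMdisj j hj k hk hjk)])⟩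
      push_neg at hMc
      exfalso
      set W : Set S := ⋃ j ∈ M, (T j : Set S) with hW
      have hWc : #W ≤ c := by
        calc #W ≤ #M * ⨆ j : M, #((T j.1 : Set S)) := Cardinal.mk_biUnion_le _ _
          _ ≤ c * c := by
              apply mul_le_mul' hMc
              apply ciSup_le'
              intro j
              exact le_trans (le_of_lt (lt_aleph0_of_finite _)) hc
          _ = c := Cardinal.mul_eq_self hc
      have hcover : A ⊆ M ∪ ⋃ a ∈ W, {j ∈ A | a ∈ T j} := by
        intro j hj
        by_contra hjn
        simp only [mem_union, mem_iUnion, not_or, not_exists] at hjn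
        obtain ⟨hjM, hjW⟩ := hjn
        have hdisj : ∀ k ∈ M, Disjoint (T j) (T k) := by
          intro k hk
          rw [Finset.disjoint_left]
          intro s hsj hsk
          exact hjW s (mem_biUnion hk hsk) ⟨hj, hsj⟩
        apply hjM
        have : insert j M ∈ {M : Set J | M ⊆ A ∧ ∀ j ∈ M, ∀ k ∈ M, j ≠ k → Disjoint (T j) (T k)} := by
          constructor
          · exact insert_subset hj hMA
          · rintro j' hj' k' hk' hne
            rcases hj' with rfl | hj' <;> rcases hk' with rfl | hk'
            · exact absurd rfl hne
            · exact hdisj k' hk'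
            · exact (hdisj j' hj').symm
            · exact hMdisj j' hj' k' hk' hne
        have := hMmax this (subset_insert j M)
        exact this (mem_insert j M)
      apply hA
      calc #A ≤ #(M ∪ ⋃ a ∈ W, {j ∈ A | a ∈ T j} : Set J) := Cardinal.mk_le_mk_of_subset hcover
        _ ≤ #M + #(⋃ a ∈ W, {j ∈ A | a ∈ T j} : Set J) := Cardinal.mk_union_le _ _
        _ ≤ c + c * c := by
            apply add_le_add hMc
            calc #(⋃ a ∈ W, {j ∈ A | a ∈ T j} : Set J) ≤ #W * ⨆ a : W, #{j ∈ A | a.1 ∈ T j} :=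
                  Cardinal.mk_biUnion_le _ _
              _ ≤ c * c := mul_le_mul' hWc (ciSup_le' fun a => hex a.1)
        _ = c := by rw [Cardinal.mul_eq_self hc, Cardinal.add_eq_self hc]

lemma delta_system (c : Cardinal.{u}) (hc : ℵ₀ ≤ c) {J S : Type u}
    (T : J → Finset S) (A : Set J) (hA : ¬ #A ≤ c) :
    ∃ (R : Finset S) (B : Set J), B ⊆ A ∧ ¬ #B ≤ c ∧
      ∀ j ∈ B, ∀ k ∈ B, j ≠ k → ∀ s ∈ T j, s ∈ T k → s ∈ R := by
  by_cases hn : ∃ n : ℕ, ¬ #{j ∈ A | (T j).card = n} ≤ c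
  · obtain ⟨n, hn⟩ := hn
    obtain ⟨R, B, hBsub, hB, hR⟩ := delta_aux c hc n T {j ∈ A | (T j).card = n} hn
      (fun j hj => le_of_eq hj.2)
    exact ⟨R, B, fun j hj => (hBsub hj).1, hB, hR⟩
  · push_neg at hn
    exfalso
    apply hA
    have hcover : A ⊆ ⋃ n : ULift.{u} ℕ, {j ∈ A | (T j).card = n.down} := fun j hj =>
      mem_iUnion.mpr ⟨ULift.up (T j).card, hj, rfl⟩
    calc #A ≤ #(⋃ n : ULift.{u} ℕ, {j ∈ A | (T j).card = n.down} : Set J) :=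
          Cardinal.mk_le_mk_of_subset hcover
      _ ≤ #(ULift.{u} ℕ) * ⨆ n : ULift.{u} ℕ, #{j ∈ A | (T j).card = n.down} :=
          Cardinal.mk_iUnion_le _
      _ ≤ ℵ₀ * c := by
          have h1 : #(ULift.{u} ℕ) = ℵ₀ := by simp
          rw [h1]
          exact mul_le_mul' le_rfl (ciSup_le' fun n => hn n.down)
      _ ≤ c * c := mul_le_mul' hc le_rfl
      _ = c := Cardinal.mul_eq_self hc

lemma propI_of_surj {X Y : Type u} [TopologicalSpace X] [TopologicalSpace Y]
    {f : X → Y} (hcont : Continuous f) (hsurj : Function.Surjective f)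
    {c : Cardinal.{u}} (hX : PropI c X) : PropI c Y := by
  intro I V hopen hne hlf
  apply hX I (fun i => f ⁻¹' V i) (fun i => (hopen i).preimage hcont)
    (fun i => ((hne i).preimage hsurj))
  intro x
  obtain ⟨N, hN, hfin⟩ := hlf (f x)
  refine ⟨f ⁻¹' N, hcont.continuousAt.preimage_mem_nhds hN, hfin.subset ?_⟩
  rintro i ⟨z, hz1, hz2⟩
  exact ⟨f z, hz1, hz2⟩

lemma restrict_surj {S : Type u} (X : S → Type u) [∀ s, Nonempty (X s)] (T : Finset S) :
    Function.Surjective (fun (x : ∀ s, X s) (s : T) => x s.1) := by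
  classical
  intro y
  refine ⟨fun s => if h : s ∈ T then y ⟨s, h⟩ else Classical.arbitrary _, ?_⟩
  funext s
  simp [s.2]

theorem stmt16 (c : Cardinal.{u}) (hc : Cardinal.aleph0 ≤ c)
    (S : Type u) (X : S → Type u) [∀ s, TopologicalSpace (X s)]
    [∀ s, Nonempty (X s)] :
    PropI c (∀ s, X s) ↔ ∀ T : Finset S, PropI c (∀ s : T, X s) := by
  classical
  constructor
  · intro h T
    exact propI_of_surj (continuous_pi fun s => continuous_apply _) (restrict_surj X T) h
  · intro hT I U hopen hne hlf
    by_contra hI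
    choose x hx using hne
    have hbox : ∀ i, ∃ (F : Finset S) (u : ∀ s, Set (X s)),
        (∀ s ∈ F, IsOpen (u s) ∧ x i s ∈ u s) ∧ Set.pi (F : Set S) u ⊆ U i :=
      fun i => (isOpen_pi_iff.mp (hopen i)) (x i) (hx i)
    choose T u hTu hsub using hbox
    set B : I → Set (∀ s, X s) := fun i => Set.pi (T i : Set S) (u i) with hBdef
    have hBopen : ∀ i, IsOpen (B i) :=
      fun i => isOpen_set_pi (T i).finite_toSet (fun s hs => (hTu i s hs).1)
    have hBx : ∀ i, x i ∈ B i := fun i s hs => (hTu i s hs).2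
    have hBlf : LocallyFinite B := hlf.subset hsub
    obtain ⟨R, Bs, -, hBc, hroot⟩ := delta_system c hc T Set.univ (by rwa [mk_univ])
    -- project the boxes to the finite subproduct over R
    set V : Bs → Set (∀ s : R, X s) := fun j => Set.pi Set.univ
      (fun s : R => if (s : S) ∈ T j.1 then u j.1 (s : S) else Set.univ) with hVdef
    have hVopen : ∀ j, IsOpen (V j) := by
      intro j
      refine isOpen_set_pi finite_univ (fun s _ => ?_)
      split_ifs with h
      · exact (hTu j.1 s h).1
      · exact isOpen_univ
    have hVne : ∀ j : Bs, (V j).Nonempty := by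
      intro j
      refine ⟨fun s => x j.1 s.1, fun s _ => ?_⟩
      dsimp only
      split_ifs with h
      · exact (hTu j.1 s h).2
      · trivial
    have hVlf : LocallyFinite V := by
      intro y
      set x0 : ∀ s, X s := fun s => if h : s ∈ R then y ⟨s, h⟩ else Classical.arbitrary _
        with hx0
      obtain ⟨N, hN, hNfin⟩ := hBlf x0
      obtain ⟨O, hON, hOopen, hxO⟩ := mem_nhds_iff.mp hN
      obtain ⟨F, w, hFw, hFO⟩ := isOpen_pi_iff.mp hOopen x0 hxO
      refine ⟨Set.pi Set.univ (fun s : R => if (s : S) ∈ F then w (s : S) else Set.univ),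
        ?_, ?_⟩
      · apply IsOpen.mem_nhds
        · refine isOpen_set_pi finite_univ (fun s _ => ?_)
          split_ifs with h
          · exact (hFw s h).1
          · exact isOpen_univ
        · intro s _
          dsimp only
          split_ifs with h
          · have h2 := (hFw s.1 h).2
            rw [hx0] at h2
            simpa [s.2] using h2
          · trivial
      · -- the set of j whose projected box meets this neighborhood is finite
        have hG1 : {j : Bs | (B j.1 ∩ Set.pi (F : Set S) w).Nonempty}.Finite := by
          have heq : {j : Bs | (B j.1 ∩ Set.pi (F : Set S) w).Nonempty}
              = Subtype.val ⁻¹' {i : I | (B i ∩ Set.pi (F : Set S) w).Nonempty} := rfl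
          rw [heq]
          apply Set.Finite.preimage Subtype.val_injective.injOn
          apply hNfin.subset
          rintro i ⟨z, hz1, hz2⟩
          exact ⟨z, hz1, hON (hFO hz2)⟩
        have hG2 : {j : Bs | ∃ s ∈ F, s ∈ T j.1 ∧ s ∉ R}.Finite := by
          set g : Bs → Option S := fun j =>
            if h : ∃ s, s ∈ F ∧ s ∈ T j.1 ∧ s ∉ R then some h.choose else none with hg
          have himg : g '' {j : Bs | ∃ s ∈ F, s ∈ T j.1 ∧ s ∉ R} ⊆ some '' ↑F := by
            rintro o ⟨j, hj, rfl⟩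
            have hj' : ∃ s, s ∈ F ∧ s ∈ T j.1 ∧ s ∉ R := by
              obtain ⟨s, h1, h2, h3⟩ := hj; exact ⟨s, h1, h2, h3⟩
            rw [hg]
            simp only [dif_pos hj']
            exact ⟨hj'.choose, hj'.choose_spec.1, rfl⟩
          apply Set.Finite.of_finite_image ((F.finite_toSet.image some).subset himg)
          intro j hj k hk hjk
          have hj' : ∃ s, s ∈ F ∧ s ∈ T j.1 ∧ s ∉ R := by
            obtain ⟨s, h1, h2, h3⟩ := hj; exact ⟨s, h1, h2, h3⟩
          have hk' : ∃ s, s ∈ F ∧ s ∈ T k.1 ∧ s ∉ R := by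
            obtain ⟨s, h1, h2, h3⟩ := hk; exact ⟨s, h1, h2, h3⟩
          rw [hg] at hjk
          simp only [dif_pos hj', dif_pos hk', Option.some_inj] at hjk
          by_contra hne'
          have hval : j.1 ≠ k.1 := fun h => hne' (Subtype.ext h)
          have := hroot j.1 j.2 k.1 k.2 hval hj'.choose hj'.choose_spec.2.1
            (hjk ▸ hk'.choose_spec.2.1)
          exact hj'.choose_spec.2.2 this
        apply (hG1.union hG2).subset
        rintro j ⟨z, hzV, hzM⟩
        by_cases hj2 : ∃ s ∈ F, s ∈ T j.1 ∧ s ∉ R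
        · exact Or.inr hj2
        · push_neg at hj2
          left
          set p : ∀ s, X s := fun s =>
            if h : s ∈ R then z ⟨s, h⟩ else if h2 : s ∈ T j.1 then x j.1 s else x0 s
            with hp
          refine ⟨p, ?_, ?_⟩
          · rw [hBdef]
            dsimp only
            rw [Set.mem_pi]
            intro s hs
            rw [Finset.mem_coe] at hs
            rw [hp]
            dsimp only
            by_cases h : s ∈ R
            · rw [dif_pos h]
              have := hzV ⟨s, h⟩ (mem_univ _)
              simpa [hs] using this
            · rw [dif_neg h, dif_pos hs]
              exact (hTu j.1 s hs).2
          · rw [Set.mem_pi]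
            intro s hs
            rw [Finset.mem_coe] at hs
            rw [hp]
            dsimp only
            by_cases h : s ∈ R
            · rw [dif_pos h]
              have := hzM ⟨s, h⟩ (mem_univ _)
              simpa [hs] using this
            · have hsT : s ∉ T j.1 := fun hsT => h (hj2 s hs hsT)
              rw [dif_neg h, dif_neg hsT]
              exact (hFw s hs).2
    have := hT R ↥Bs V hVopen hVne hVlf
    exact hBc this
end

section
/- Let ℵ be an infinite cardinal, X a topological product ∏_{s∈S} X_s, Y a topological space with property (III_ℵ), and suppose (u_s, v_s, y_s)_{s∈T₀} is a family indexed by T₀ ⊆ S with |T₀| > ℵ such that u_s, v_s ∈ X and y_s ∈ Y, and |f(u_s, y_s) − f(v_s, y_s)| > ε for a fixed ε > 0, where f : X × Y → ℝ is continuous in the second variable. Then there exist b ∈ Y and T ⊆ T₀ with |T| > ℵ such that |f(u_s, b) − f(v_s, b)| > ε for all s ∈ T. -/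
universe u

open Cardinal

theorem stmt18 (c : Cardinal.{u}) (hc : Cardinal.aleph0 ≤ c)
    (S : Type u) (X : S → Type u) [∀ s, TopologicalSpace (X s)]
    (Y : Type u) [TopologicalSpace Y] (hY : PropIII c Y)
    (f : (∀ s, X s) → Y → ℝ)
    (hf : ∀ x : ∀ s, X s, Continuous (f x))
    (T₀ : Set S) (hT₀ : c < #T₀)
    (u v : T₀ → ∀ s, X s) (y : T₀ → Y) (ε : ℝ) (hε : 0 < ε)
    (hsep : ∀ s : T₀, ε < |f (u s) (y s) - f (v s) (y s)|) :
    ∃ (b : Y) (T : Set T₀), c < #T ∧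
      ∀ s ∈ T, ε < |f (u s) b - f (v s) b| := by
  set W : T₀ → Set Y := fun s => {b | ε < |f (u s) b - f (v s) b|} with hW
  by_contra h
  push_neg at h
  have hle : #(T₀ : Set S) ≤ c := by
    apply hY (↥T₀) W
    · intro s
      have : Continuous fun b => |f (u s) b - f (v s) b| :=
        ((hf (u s)).sub (hf (v s))).abs
      exact isOpen_lt continuous_const this
    · intro s
      exact ⟨y s, hsep s⟩
    · intro b
      by_contra hb
      push_neg at hb
      obtain ⟨s, hs, hs'⟩ := h b {i | b ∈ W i} hb
      exact absurd hs (not_lt.mpr hs' : ¬ ε < _)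
  exact absurd hle (not_le.mpr hT₀)
end
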